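/- arXiv:2112.09304 — 6 statements merged into one kernel-verified Lean document; each statement's English description precedes it below -/
import Mathlib

section
/- Let δ > 0 and w : [δ,∞) → ℝ be twice differentiable, continuously differentiable, and bounded below. Suppose t·w''(t) + α·w'(t) ≤ m(t) for almost every t > δ, where α > 1 and m : (δ,∞) → [0,∞) is integrable. Then the positive part of w' is integrable on (δ,∞) and lim_{t→∞} w(t) exists. -/
open MeasureTheory Filter Set

open scoped ENNReal

/-!
Multiplying the differential inequality by `t ^ (α - 1)` turns it into
`(t ^ α * w' t)' ≤ t ^ (α - 1) * m t`, hence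
`w' t ≤ t ^ (-α) * (δ ^ α * w' δ + ∫_δ^t s ^ (α - 1) * m s)`.
The right-hand side is integrable on `(δ, ∞)`: by Tonelli,
`∫_δ^∞ t ^ (-α) ∫_δ^t s ^ (α - 1) * m s = (α - 1)⁻¹ * ∫_δ^∞ m`
(a Hardy-type identity).
So the positive part of `w'` is integrable, and since `w` is bounded below,
`∫_δ^t (w')⁻ = ∫_δ^t (w')⁺ - (w t - w δ)` stays bounded; thus `w'` is integrable and `w`
converges.
-/

theorem sub_le_integral_of_hasDerivAt_of_ae_le {g g' φ : ℝ → ℝ} {a b : ℝ} (hab : a ≤ b)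
    (hcont : ContinuousOn g (Icc a b)) (hderiv : ∀ x ∈ Ioo a b, HasDerivAt g (g' x) x)
    (hφ : IntegrableOn φ (Icc a b)) (hle : ∀ᵐ x ∂volume.restrict (Ioo a b), g' x ≤ φ x) :
    g b - g a ≤ ∫ x in a..b, φ x := by
  have hle' : max φ g' =ᵐ[volume.restrict (Icc a b)] φ := by
    rw [← Measure.restrict_congr_set Ioo_ae_eq_Icc]
    filter_upwards [hle] with x hx using max_eq_left hx
  calc g b - g a ≤ ∫ x in a..b, max φ g' x :=
        intervalIntegral.sub_le_integral_of_hasDeriv_right_of_le hab hcont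
          (fun x hx => (hderiv x hx).hasDerivWithinAt) (hφ.congr_fun_ae hle'.symm)
          (fun x _ => le_max_right _ _)
    _ = ∫ x in a..b, φ x := by
      simp only [intervalIntegral.integral_of_le hab, ← integral_Icc_eq_integral_Ioc]
      exact integral_congr_ae hle'

theorem hasDerivAt_rpow_mul {u u' : ℝ → ℝ} {x α : ℝ} (hx : 0 < x) (hu : HasDerivAt u (u' x) x) :
    HasDerivAt (fun y => y ^ α * u y) (x ^ (α - 1) * (x * u' x + α * u x)) x := by
  refine ((Real.hasDerivAt_rpow_const (p := α) (Or.inl hx.ne')).mul hu).congr_deriv ?_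
  rw [show x ^ α = x ^ (α - 1) * x by rw [← Real.rpow_add_one hx.ne']; ring_nf]
  ring

theorem integrableOn_Icc_rpow_mul {f : ℝ → ℝ} {a β : ℝ} (ha : 0 < a)
    (hf : IntegrableOn f (Ioi a)) (b : ℝ) : IntegrableOn (fun s => s ^ β * f s) (Icc a b) := by
  refine IntegrableOn.continuousOn_mul ?_ ?_ isCompact_Icc
  · exact fun x hx =>
      (Real.continuousAt_rpow_const x β (Or.inl (ha.trans_le hx.1).ne')).continuousWithinAt
  · exact (integrableOn_Icc_iff_integrableOn_Ioc).2 (hf.mono_set Ioc_subset_Ioi_self)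

theorem lintegral_Ici_rpow_neg {s α : ℝ} (hs : 0 < s) (hα : 1 < α) :
    ∫⁻ t in Ici s, ENNReal.ofReal (t ^ (-α)) = ENNReal.ofReal (s ^ (1 - α) / (α - 1)) := by
  rw [Measure.restrict_congr_set Ioi_ae_eq_Ici.symm, ← ofReal_integral_eq_lintegral_ofReal
    (integrableOn_Ioi_rpow_of_lt (by linarith) hs)
    ((ae_restrict_mem measurableSet_Ioi).mono fun t ht => Real.rpow_nonneg (hs.trans ht).le _),
    integral_Ioi_rpow_of_lt (by linarith) hs]
  congr 1
  rw [← neg_div_neg_eq]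
  ring_nf

theorem lintegral_Ioi_rpow_neg_mul_lintegral_Ioc {a α : ℝ} (ha : 0 < a) (hα : 1 < α)
    {g : ℝ → ℝ≥0∞} (hg : AEMeasurable g (volume.restrict (Ioi a))) :
    ∫⁻ t in Ioi a, ENNReal.ofReal (t ^ (-α)) * ∫⁻ s in Ioc a t, g s =
      ∫⁻ s in Ioi a, ENNReal.ofReal (s ^ (1 - α) / (α - 1)) * g s := by
  set F : ℝ × ℝ → ℝ≥0∞ :=
    {p | p.2 ≤ p.1}.indicator fun p => ENNReal.ofReal (p.1 ^ (-α)) * g p.2 with hF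
  have hF_apply : ∀ t s, F (t, s) = ENNReal.ofReal (t ^ (-α)) * (Iic t).indicator g s ∧
      F (t, s) = (Ici s).indicator (fun t => ENNReal.ofReal (t ^ (-α))) t * g s := by
    intro t s
    by_cases hst : s ≤ t <;> simp [hF, indicator, hst]
  have hFmeas : AEMeasurable F ((volume.restrict (Ioi a)).prod (volume.restrict (Ioi a))) :=
    ((measurable_fst.pow_const _).ennreal_ofReal.aemeasurable.mul hg.comp_snd).indicator
      (measurableSet_le measurable_snd measurable_fst)
  calc ∫⁻ t in Ioi a, ENNReal.ofReal (t ^ (-α)) * ∫⁻ s in Ioc a t, g s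
      = ∫⁻ t in Ioi a, ∫⁻ s in Ioi a, F (t, s) := by
        refine lintegral_congr fun t => ?_
        simp only [(hF_apply t _).1, lintegral_const_mul' _ _ ENNReal.ofReal_ne_top,
          lintegral_indicator measurableSet_Iic, Measure.restrict_restrict measurableSet_Iic,
          Iic_inter_Ioi]
    _ = ∫⁻ s in Ioi a, ∫⁻ t in Ioi a, F (t, s) :=
        lintegral_lintegral_swap (f := fun t s => F (t, s)) hFmeas
    _ = ∫⁻ s in Ioi a, ENNReal.ofReal (s ^ (1 - α) / (α - 1)) * g s := by
        refine setLIntegral_congr_fun measurableSet_Ioi fun s hs => ?_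
        have hsub : Ici s ∩ Ioi a = Ici s :=
          inter_eq_left.2 fun _ ht => mem_Ioi.2 (lt_of_lt_of_le hs ht)
        simp only [(hF_apply _ s).2]
        rw [lintegral_mul_const _
            ((by fun_prop : Measurable fun t : ℝ => ENNReal.ofReal (t ^ (-α))).indicator
              measurableSet_Ici),
          lintegral_indicator measurableSet_Ici, Measure.restrict_restrict measurableSet_Ici, hsub,
          lintegral_Ici_rpow_neg (ha.trans hs) hα]

theorem integrableOn_Ioi_rpow_neg_mul_integral {f : ℝ → ℝ} {a α : ℝ} (ha : 0 < a) (hα : 1 < α)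
    (hf : IntegrableOn f (Ioi a)) (hf0 : ∀ s, 0 ≤ f s) :
    IntegrableOn (fun t => t ^ (-α) * ∫ s in a..t, s ^ (α - 1) * f s) (Ioi a) := by
  have hpos : ∀ s ∈ Ici a, 0 ≤ s ^ (α - 1) * f s := fun s hs =>
    mul_nonneg (Real.rpow_nonneg (ha.trans_le hs).le _) (hf0 s)
  have hint : ∀ t, IntegrableOn (fun s => s ^ (α - 1) * f s) (Icc a t) :=
    integrableOn_Icc_rpow_mul ha hf
  have hprim : ContinuousOn (fun t => ∫ s in a..t, s ^ (α - 1) * f s) (Ioi a) := by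
    intro t ht
    have hat : a ≤ t + 1 := ht.le.trans (lt_add_one t).le
    have h := intervalIntegral.continuousOn_primitive_interval
      (by rw [uIcc_of_le hat]; exact hint (t + 1))
    rw [uIcc_of_le hat] at h
    exact (h.continuousAt (Icc_mem_nhds ht (lt_add_one t))).continuousWithinAt
  have hrpow : ContinuousOn (fun t : ℝ => t ^ (-α)) (Ioi a) := fun t ht =>
    (Real.continuousAt_rpow_const t _ (Or.inl (ha.trans ht).ne')).continuousWithinAt
  refine ⟨(hrpow.mul hprim).aestronglyMeasurable measurableSet_Ioi, ?_⟩
  rw [hasFiniteIntegral_iff_ofReal]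
  swap
  · filter_upwards [ae_restrict_mem measurableSet_Ioi] with t ht
    exact mul_nonneg (Real.rpow_nonneg (ha.trans ht).le _)
      (intervalIntegral.integral_nonneg ht.le fun s hs => hpos s hs.1)
  calc ∫⁻ t in Ioi a, ENNReal.ofReal (t ^ (-α) * ∫ s in a..t, s ^ (α - 1) * f s)
      = ∫⁻ t in Ioi a, ENNReal.ofReal (t ^ (-α)) *
          ∫⁻ s in Ioc a t, ENNReal.ofReal (s ^ (α - 1) * f s) := by
        refine setLIntegral_congr_fun measurableSet_Ioi fun t ht => ?_
        rw [ENNReal.ofReal_mul (Real.rpow_nonneg (ha.trans ht).le _),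
          intervalIntegral.integral_of_le ht.le, ofReal_integral_eq_lintegral_ofReal
            ((hint t).mono_set Ioc_subset_Icc_self)
            ((ae_restrict_mem measurableSet_Ioc).mono fun s hs => hpos s hs.1.le)]
    _ = ∫⁻ s in Ioi a, ENNReal.ofReal (s ^ (1 - α) / (α - 1)) *
          ENNReal.ofReal (s ^ (α - 1) * f s) :=
        lintegral_Ioi_rpow_neg_mul_lintegral_Ioc ha hα
          ((by fun_prop : Measurable fun s : ℝ => s ^ (α - 1)).aemeasurable.mul
            hf.aemeasurable).ennreal_ofReal
    _ = ∫⁻ s in Ioi a, ENNReal.ofReal (f s / (α - 1)) := by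
        refine setLIntegral_congr_fun measurableSet_Ioi fun s hs => ?_
        have hs0 : 0 < s := ha.trans hs
        rw [← ENNReal.ofReal_mul (div_nonneg (Real.rpow_nonneg hs0.le _) (by linarith))]
        congr 1
        rw [div_mul_eq_mul_div, ← mul_assoc, ← Real.rpow_add hs0]
        norm_num
    _ < ⊤ := (hf.div_const _).lintegral_lt_top

section RpowODE

variable {a α : ℝ} {u u' m : ℝ → ℝ}

theorem rpow_mul_le_add_integral (ha : 0 < a) (hu : ContinuousOn u (Ici a))
    (hu' : ∀ x ∈ Ioi a, HasDerivAt u (u' x) x) (hm : IntegrableOn m (Ioi a))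
    (hineq : ∀ᵐ x ∂volume.restrict (Ioi a), x * u' x + α * u x ≤ m x) {t : ℝ} (ht : a ≤ t) :
    t ^ α * u t ≤ a ^ α * u a + ∫ s in a..t, s ^ (α - 1) * m s := by
  have hcont : ContinuousOn (fun x => x ^ α * u x) (Icc a t) :=
    ContinuousOn.mul (fun x hx => (Real.continuousAt_rpow_const x α
      (Or.inl (ha.trans_le hx.1).ne')).continuousWithinAt) (hu.mono Icc_subset_Ici_self)
  have hle : ∀ᵐ x ∂volume.restrict (Ioo a t),
      x ^ (α - 1) * (x * u' x + α * u x) ≤ x ^ (α - 1) * m x := by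
    filter_upwards [ae_restrict_of_ae_restrict_of_subset Ioo_subset_Ioi_self hineq,
      ae_restrict_mem measurableSet_Ioo] with x hx hxt
    exact mul_le_mul_of_nonneg_left hx (Real.rpow_nonneg (ha.trans hxt.1).le _)
  have := sub_le_integral_of_hasDerivAt_of_ae_le ht hcont
    (fun x hx => hasDerivAt_rpow_mul (ha.trans hx.1) (hu' x hx.1))
    (integrableOn_Icc_rpow_mul ha hm t) hle
  linarith

theorem integrableOn_max_zero_of_mul_deriv_add_mul_le (ha : 0 < a) (hα : 1 < α)
    (hu : ContinuousOn u (Ici a)) (hu' : ∀ x ∈ Ioi a, HasDerivAt u (u' x) x)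
    (hm : IntegrableOn m (Ioi a))
    (hineq : ∀ᵐ x ∂volume.restrict (Ioi a), x * u' x + α * u x ≤ m x) :
    IntegrableOn (fun t => max (u t) 0) (Ioi a) := by
  -- the inequality persists with `|m|` in place of `m`, making the bounds below nonnegative
  have hineq' : ∀ᵐ x ∂volume.restrict (Ioi a), x * u' x + α * u x ≤ |m x| := by
    filter_upwards [hineq] with x hx using hx.trans (le_abs_self _)
  set Φ := fun t => ∫ s in a..t, s ^ (α - 1) * |m s|
  have hdom : IntegrableOn (fun t => |a ^ α * u a| * t ^ (-α) + t ^ (-α) * Φ t) (Ioi a) :=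
    ((integrableOn_Ioi_rpow_of_lt (by linarith) ha).const_mul _).add
      (integrableOn_Ioi_rpow_neg_mul_integral ha hα hm.abs fun s => abs_nonneg _)
  refine hdom.mono' (((hu.mono Ioi_subset_Ici_self).sup continuousOn_const).aestronglyMeasurable
    measurableSet_Ioi) ?_
  filter_upwards [ae_restrict_mem measurableSet_Ioi] with t ht
  have ht0 : 0 < t := ha.trans ht
  have hΦ : 0 ≤ Φ t := intervalIntegral.integral_nonneg ht.le fun s hs =>
    mul_nonneg (Real.rpow_nonneg (ha.trans_le hs.1).le _) (abs_nonneg _)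
  have hbound : u t ≤ t ^ (-α) * (a ^ α * u a + Φ t) := by
    calc u t = t ^ (-α) * (t ^ α * u t) := by
          rw [← mul_assoc, ← Real.rpow_add ht0, neg_add_cancel, Real.rpow_zero, one_mul]
      _ ≤ t ^ (-α) * (a ^ α * u a + Φ t) :=
          mul_le_mul_of_nonneg_left (rpow_mul_le_add_integral ha hu hu' hm.abs hineq' ht.le)
            (Real.rpow_nonneg ht0.le _)
  have hrpow : 0 ≤ t ^ (-α) := Real.rpow_nonneg ht0.le _
  rw [Real.norm_of_nonneg (le_max_right _ _)]
  refine max_le ?_ (by positivity)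
  nlinarith [le_abs_self (a ^ α * u a)]

end RpowODE

theorem integrableOn_Ioi_of_hasDerivAt_of_bddBelow {F f : ℝ → ℝ} {a B : ℝ}
    (hF : ∀ t ∈ Ici a, HasDerivAt F (f t) t) (hf : ContinuousOn f (Ici a))
    (hB : ∀ t ∈ Ici a, B ≤ F t) (hpos : IntegrableOn (fun t => max (f t) 0) (Ioi a)) :
    IntegrableOn f (Ioi a) := by
  have hloc : ∀ {g : ℝ → ℝ}, ContinuousOn g (Ici a) → ∀ t, IntegrableOn g (Icc a t) :=
    fun hg t => (hg.mono Icc_subset_Ici_self).integrableOn_Icc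
  have hneg : IntegrableOn (fun t => max (-f t) 0) (Ioi a) := by
    refine integrableOn_Ioi_of_intervalIntegral_norm_bounded
      ((∫ x in Ioi a, max (f x) 0) + (F a - B)) a
      (fun t => (hloc (hf.neg.sup continuousOn_const) t).mono_set Ioc_subset_Icc_self)
      tendsto_id ?_
    filter_upwards [eventually_ge_atTop a] with t ht
    have hii : ∀ {g : ℝ → ℝ}, ContinuousOn g (Ici a) → IntervalIntegrable g volume a t :=
      fun hg => (intervalIntegrable_iff_integrableOn_Icc_of_le ht).2 (hloc hg t)
    have hFTC : ∫ x in a..t, f x = F t - F a :=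
      intervalIntegral.integral_eq_sub_of_hasDerivAt
        (fun x hx => hF x (by rw [uIcc_of_le ht] at hx; exact hx.1)) (hii hf)
    have hP : ∫ x in a..t, max (f x) 0 ≤ ∫ x in Ioi a, max (f x) 0 := by
      rw [intervalIntegral.integral_of_le ht]
      exact setIntegral_mono_set hpos (ae_of_all _ fun x => le_max_right _ _)
        Ioc_subset_Ioi_self.eventuallyLE
    have hsplit : ∫ x in a..t, ‖max (-f x) 0‖ =
        (∫ x in a..t, max (f x) 0) - ∫ x in a..t, f x := by
      rw [← intervalIntegral.integral_sub (hii (g := fun x => max (f x) 0)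
        (hf.sup continuousOn_const)) (hii hf)]
      congr 1 with x
      rw [Real.norm_of_nonneg (le_max_right _ _)]
      linarith [max_zero_sub_eq_self (f x)]
    show ∫ x in a..t, ‖max (-f x) 0‖ ≤ _
    linarith [hB t ht]
  exact (hpos.sub hneg).congr_fun (fun x _ => max_zero_sub_eq_self (f x)) measurableSet_Ioi

theorem stmt4_general (δ α : ℝ) (hδ : 0 < δ) (hα : 1 < α)
    (w w' w'' : ℝ → ℝ) (m : ℝ → ℝ)
    (hw : ∀ t, δ ≤ t → HasDerivAt w (w' t) t)
    (hw'c : ContinuousOn w' (Set.Ici δ))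
    (hw' : ∀ t, δ < t → HasDerivAt w' (w'' t) t)
    (hbdd : ∃ B, ∀ t, δ ≤ t → B ≤ w t)
    (hmint : IntegrableOn m (Set.Ioi δ))
    (hineq : ∀ᵐ t ∂(volume.restrict (Set.Ioi δ)), t * w'' t + α * w' t ≤ m t) :
    IntegrableOn (fun t => max (w' t) 0) (Set.Ioi δ) ∧
      ∃ l, Filter.Tendsto w Filter.atTop (nhds l) := by
  obtain ⟨B, hB⟩ := hbdd
  have hpos := integrableOn_max_zero_of_mul_deriv_add_mul_le hδ hα hw'c hw' hmint hineq
  have hint := integrableOn_Ioi_of_hasDerivAt_of_bddBelow hw hw'c hB hpos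
  exact ⟨hpos, _,
    tendsto_limUnder_of_hasDerivAt_of_integrableOn_Ioi (fun t ht => hw t ht.le) hint⟩

theorem stmt4 (δ α : ℝ) (hδ : 0 < δ) (hα : 1 < α)
    (w w' w'' : ℝ → ℝ) (m : ℝ → ℝ)
    (hw : ∀ t, δ ≤ t → HasDerivAt w (w' t) t)
    (hw'c : ContinuousOn w' (Set.Ici δ))
    (hw' : ∀ t, δ < t → HasDerivAt w' (w'' t) t)
    (hbdd : ∃ B, ∀ t, δ ≤ t → B ≤ w t)
    (hmnn : ∀ t, δ < t → 0 ≤ m t)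
    (hmint : IntegrableOn m (Set.Ioi δ))
    (hineq : ∀ᵐ t ∂(volume.restrict (Set.Ioi δ)), t * w'' t + α * w' t ≤ m t) :
    IntegrableOn (fun t => max (w' t) 0) (Set.Ioi δ) ∧
      ∃ l, Filter.Tendsto w Filter.atTop (nhds l) :=
  stmt4_general δ α hδ hα w w' w'' m hw hw'c hw' hbdd hmint hineq
end

section
/- Let m : [δ,T] → [0,∞) be integrable, c ≥ 0, and w : [δ,T] → ℝ continuous with (1/2) w(t)² ≤ (1/2) c² + ∫_δ^t m(τ) w(τ) dτ for all t ∈ [δ,T]. Then |w(t)| ≤ c + ∫_δ^t m(τ) dτ for all t ∈ [δ,T]. -/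
open MeasureTheory Filter Asymptotics Set

theorem key_fubini (δ t : ℝ) (hδt : δ ≤ t) (m : ℝ → ℝ)
    (hm : IntegrableOn m (Set.Ioc δ t)) :
    ∫ τ in Set.Ioc δ t, m τ * (∫ s in Set.Ioc δ τ, m s) =
      (1/2) * (∫ s in Set.Ioc δ t, m s)^2 := by
  set ν : Measure ℝ := volume.restrict (Set.Ioc δ t) with hν
  have hmi : Integrable m ν := hm
  set F : ℝ × ℝ → ℝ := fun p => m p.1 * m p.2 with hF
  have hFi : Integrable F (ν.prod ν) := hmi.mul_prod hmi
  have hItot : ∫ p, F p ∂(ν.prod ν) = (∫ s in Set.Ioc δ t, m s)^2 := by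
    rw [integral_prod_mul]; ring
  set A : Set (ℝ × ℝ) := {p | p.1 ≤ p.2} with hA
  have hAm : MeasurableSet A := measurableSet_le measurable_fst measurable_snd
  have hsplit : (∫ p in A, F p ∂(ν.prod ν)) + (∫ p in Aᶜ, F p ∂(ν.prod ν))
      = ∫ p, F p ∂(ν.prod ν) := integral_add_compl hAm hFi
  -- first piece
  have h1 : (∫ p in A, F p ∂(ν.prod ν)) = ∫ y in Set.Ioc δ t, m y * (∫ s in Set.Ioc δ y, m s) := by
    rw [← integral_indicator hAm]
    rw [integral_prod_symm _ (hFi.indicator hAm)]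
    refine integral_congr_ae ?_
    filter_upwards [ae_restrict_mem measurableSet_Ioc] with y hy
    have : (fun x => A.indicator F (x, y)) = (Set.Iic y).indicator (fun x => m x * m y) := by
      funext x
      by_cases hxy : x ≤ y
      · simp [hA, hF, Set.indicator_of_mem, hxy, Set.mem_setOf_eq]
      · simp [hA, hF, Set.indicator_of_notMem, hxy, Set.mem_setOf_eq]
    rw [this, integral_indicator measurableSet_Iic, hν, Measure.restrict_restrict measurableSet_Iic]
    have hset : Set.Iic y ∩ Set.Ioc δ t = Set.Ioc δ y := by
      ext z
      simp only [Set.mem_inter_iff, Set.mem_Iic, Set.mem_Ioc]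
      constructor
      · rintro ⟨h1, h2, h3⟩; exact ⟨h2, h1⟩
      · rintro ⟨h1, h2⟩; exact ⟨h2, h1, h2.trans hy.2⟩
    rw [hset, integral_mul_const, mul_comm]
  -- second piece
  have h2 : (∫ p in Aᶜ, F p ∂(ν.prod ν)) = ∫ x in Set.Ioc δ t, m x * (∫ s in Set.Ioc δ x, m s) := by
    rw [← integral_indicator hAm.compl]
    rw [integral_prod _ ((hFi.indicator hAm.compl))]
    refine integral_congr_ae ?_
    filter_upwards [ae_restrict_mem measurableSet_Ioc] with x hx
    have : (fun y => Aᶜ.indicator F (x, y)) = (Set.Iio x).indicator (fun y => m x * m y) := by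
      funext y
      by_cases hxy : y < x
      · simp [hA, hF, Set.indicator_of_mem, hxy, Set.mem_setOf_eq, not_le.mpr hxy]
      · simp [hA, hF, Set.indicator_of_notMem, hxy, Set.mem_setOf_eq, not_lt.mp hxy]
    rw [this, integral_indicator measurableSet_Iio, hν, Measure.restrict_restrict measurableSet_Iio]
    have hset : Set.Iio x ∩ Set.Ioc δ t = Set.Ioo δ x := by
      ext z
      simp only [Set.mem_inter_iff, Set.mem_Iio, Set.mem_Ioc, Set.mem_Ioo]
      constructor
      · rintro ⟨h1, h2, h3⟩; exact ⟨h2, h1⟩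
      · rintro ⟨h1, h2⟩; exact ⟨h2, h1, h2.le.trans hx.2⟩
    rw [hset, integral_const_mul, ← integral_Ioc_eq_integral_Ioo]
  have := hsplit
  rw [h1, h2, hItot] at this
  linarith

theorem stmt5 (δ T c : ℝ) (hδT : δ < T) (hc : 0 ≤ c)
    (m w : ℝ → ℝ)
    (hmnn : ∀ t ∈ Set.Icc δ T, 0 ≤ m t)
    (hmint : IntegrableOn m (Set.Icc δ T))
    (hwc : ContinuousOn w (Set.Icc δ T))
    (hineq : ∀ t ∈ Set.Icc δ T,
      (1/2) * (w t)^2 ≤ (1/2) * c^2 + ∫ τ in δ..t, m τ * w τ) :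
    ∀ t ∈ Set.Icc δ T, |w t| ≤ c + ∫ τ in δ..t, m τ := by
  set M : ℝ → ℝ := fun x => ∫ s in Set.Ioc δ x, m s with hM
  have hMcont : ContinuousOn M (Set.Icc δ T) := intervalIntegral.continuousOn_primitive hmint
  have hMnn : ∀ x ∈ Set.Icc δ T, 0 ≤ M x := by
    intro x hx
    refine setIntegral_nonneg measurableSet_Ioc fun τ hτ => ?_
    exact hmnn τ ⟨hτ.1.le, hτ.2.trans hx.2⟩
  -- bound for w and M
  obtain ⟨Bw, hBw⟩ := (isCompact_Icc : IsCompact (Set.Icc δ T)).exists_bound_of_continuousOn hwc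
  obtain ⟨BM, hBM⟩ := (isCompact_Icc : IsCompact (Set.Icc δ T)).exists_bound_of_continuousOn hMcont
  -- measurability helpers
  have hwm : ∀ a, a ∈ Set.Icc δ T → AEStronglyMeasurable w (volume.restrict (Set.Ioc δ a)) := by
    intro a ha
    refine (hwc.aestronglyMeasurable (μ := volume) measurableSet_Icc).mono_measure ?_
    exact Measure.restrict_mono (Set.Ioc_subset_Icc_self.trans (Set.Icc_subset_Icc le_rfl ha.2)) le_rfl
  have hMm : ∀ a, a ∈ Set.Icc δ T → AEStronglyMeasurable M (volume.restrict (Set.Ioc δ a)) := by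
    intro a ha
    refine (hMcont.aestronglyMeasurable (μ := volume) measurableSet_Icc).mono_measure ?_
    exact Measure.restrict_mono (Set.Ioc_subset_Icc_self.trans (Set.Icc_subset_Icc le_rfl ha.2)) le_rfl
  have hmint' : ∀ a, a ∈ Set.Icc δ T → IntegrableOn m (Set.Ioc δ a) := by
    intro a ha
    exact hmint.mono_set fun x hx => ⟨hx.1.le, hx.2.trans ha.2⟩
  have hsub : ∀ a, a ∈ Set.Icc δ T → Set.Ioc δ a ⊆ Set.Icc δ T := by
    intro a ha x hx; exact ⟨hx.1.le, hx.2.trans ha.2⟩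
  have hmw_int : ∀ a, a ∈ Set.Icc δ T → IntegrableOn (fun τ => m τ * w τ) (Set.Ioc δ a) := by
    intro a ha
    have h := Integrable.bdd_mul (c := Bw) (hmint' a ha) (hwm a ha) ?_
    · exact h.congr (Filter.Eventually.of_forall fun x => mul_comm _ _)
    · filter_upwards [ae_restrict_mem measurableSet_Ioc] with x hx
      exact hBw x (hsub a ha hx)
  have hmM_int : ∀ a, a ∈ Set.Icc δ T → IntegrableOn (fun τ => m τ * M τ) (Set.Ioc δ a) := by
    intro a ha
    have h := Integrable.bdd_mul (c := BM) (hmint' a ha) (hMm a ha) ?_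
    · exact h.congr (Filter.Eventually.of_forall fun x => mul_comm _ _)
    · filter_upwards [ae_restrict_mem measurableSet_Ioc] with x hx
      exact hBM x (hsub a ha hx)
  -- the ε-claim
  have main : ∀ ε > 0, ∀ t ∈ Set.Icc δ T, |w t| ≤ c + ε + M t := by
    intro ε hε
    by_contra hcon
    push_neg at hcon
    obtain ⟨t₀, ht₀, hlt⟩ := hcon
    set φ : ℝ → ℝ := fun x => |w x| - (c + ε + M x) with hφ
    have hφcont : ContinuousOn φ (Set.Icc δ T) :=
      hwc.abs.sub (continuousOn_const.add hMcont)
    set S : Set ℝ := {x ∈ Set.Icc δ T | 0 ≤ φ x} with hS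
    have hne : S.Nonempty := ⟨t₀, ht₀, by simp [hφ]; linarith⟩
    have hScl : IsClosed S := hφcont.preimage_isClosed_of_isClosed isClosed_Icc isClosed_Ici
    have hbdd : BddBelow S := ⟨δ, fun x hx => hx.1.1⟩
    set a := sInf S with ha
    have haS : a ∈ S := hScl.csInf_mem hne hbdd
    have haIcc : a ∈ Set.Icc δ T := haS.1
    have hφδ : φ δ < 0 := by
      have h0 := hineq δ ⟨le_rfl, hδT.le⟩
      rw [intervalIntegral.integral_same] at h0
      have hwδ : |w δ| ≤ c := by nlinarith [abs_nonneg (w δ), sq_abs (w δ)]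
      have : M δ = 0 := by simp [hM]
      simp only [hφ]; rw [this]; linarith
    have hδa : δ < a := by
      rcases lt_or_eq_of_le haIcc.1 with h | h
      · exact h
      · exfalso; rw [← h] at haS; exact absurd haS.2 (not_le.mpr hφδ)
    have hbound : ∀ s ∈ Set.Icc δ a, |w s| ≤ c + ε + M s := by
      have hlt' : ∀ s ∈ Set.Ico δ a, φ s < 0 := by
        intro s hs
        by_contra hns
        push_neg at hns
        have : s ∈ S := ⟨⟨hs.1, hs.2.le.trans haIcc.2⟩, hns⟩
        exact absurd (csInf_le hbdd this) (not_le.mpr hs.2)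
      intro s hs
      rcases lt_or_eq_of_le hs.2 with h | h
      · have := hlt' s ⟨hs.1, h⟩; simp only [hφ] at this; linarith
      · -- s = a : use continuity from the left
        subst h
        have hten : Filter.Tendsto φ (nhdsWithin a (Set.Ioo δ a)) (nhds (φ a)) := by
          refine (hφcont a haIcc).mono_left (nhdsWithin_mono _ ?_)
          intro x hx; exact ⟨hx.1.le, hx.2.le.trans haIcc.2⟩
        have hnb : (nhdsWithin a (Set.Ioo δ a)).NeBot := by
          rw [← mem_closure_iff_nhdsWithin_neBot, closure_Ioo (ne_of_lt hδa)]
          exact ⟨hδa.le, le_rfl⟩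
        have hle : φ a ≤ 0 := by
          refine le_of_tendsto hten ?_
          filter_upwards [self_mem_nhdsWithin] with x hx
          exact (hlt' x ⟨hx.1.le, hx.2⟩).le
        simp only [hφ] at hle; linarith
    -- contradiction at a
    have hMa := hMnn a haIcc
    have hkey := key_fubini δ a hδa.le m (hmint' a haIcc)
    have h0 := hineq a haIcc
    rw [intervalIntegral.integral_of_le haIcc.1] at h0
    have hmono : (∫ τ in Set.Ioc δ a, m τ * w τ) ≤ ∫ τ in Set.Ioc δ a, m τ * (c + ε + M τ) := by
      refine setIntegral_mono_on (hmw_int a haIcc) ?_ measurableSet_Ioc ?_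
      · have h1 : IntegrableOn (fun τ => m τ * (c + ε)) (Set.Ioc δ a) :=
          (hmint' a haIcc).mul_const _
        have := h1.add (hmM_int a haIcc)
        exact this.congr (Filter.Eventually.of_forall fun x => by
          simp only [Pi.add_apply]; ring)
      · intro τ hτ
        have hτ' : τ ∈ Set.Icc δ T := hsub a haIcc hτ
        refine mul_le_mul_of_nonneg_left ?_ (hmnn τ hτ')
        exact (le_abs_self _).trans (hbound τ ⟨hτ.1.le, hτ.2⟩)
    have hsplit2 : (∫ τ in Set.Ioc δ a, m τ * (c + ε + M τ))
        = (c + ε) * M a + ∫ τ in Set.Ioc δ a, m τ * M τ := by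
      have h1 : IntegrableOn (fun τ => m τ * (c + ε)) (Set.Ioc δ a) :=
        (hmint' a haIcc).mul_const _
      have heq : (∫ τ in Set.Ioc δ a, m τ * (c + ε + M τ))
          = ∫ τ in Set.Ioc δ a, (m τ * (c + ε) + m τ * M τ) := by
        refine integral_congr_ae (Filter.Eventually.of_forall fun x => by ring)
      rw [heq, integral_add h1 (hmM_int a haIcc), integral_mul_const]
      simp only [hM]; ring
    rw [hkey] at hsplit2
    -- combine
    have hfin : (1/2) * (w a)^2 < (1/2) * (c + ε + M a)^2 := by
      calc (1/2) * (w a)^2 ≤ (1/2) * c^2 + ∫ τ in Set.Ioc δ a, m τ * w τ := h0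
        _ ≤ (1/2) * c^2 + ((c + ε) * M a + (1/2) * (M a)^2) := by rw [← hsplit2]; linarith
        _ < (1/2) * (c + ε + M a)^2 := by nlinarith
    have : |w a| < c + ε + M a := by
      nlinarith [abs_nonneg (w a), sq_abs (w a)]
    have := haS.2
    simp only [hφ] at this
    linarith
  -- conclude
  intro t ht
  rw [intervalIntegral.integral_of_le ht.1]
  have : ∀ ε > 0, |w t| ≤ (c + M t) + ε := by
    intro ε hε
    have := main ε hε t ht
    linarith
  exact le_of_forall_pos_le_add this
end

section
/- Under the setting of the inertial smoothed dynamic ẍ(t) + (α/t)ẋ(t) + ∇_x f̃(x(t),μ(t)) = 0 with α > 0 and inf f > −∞, the energy W(t) = (1/2)‖ẋ(t)‖² + f̃(x(t),μ(t)) + κμ(t) converges as t → ∞ and ∫_{t₀}^∞ (1/t) ‖ẋ(t)‖² dt < ∞. -/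
open MeasureTheory Filter Asymptotics Set
open scoped RealInnerProductSpace Topology

/-!
Freeze the smoothing parameter at `μ u`: along the trajectory, the energy
`τ ↦ ½‖ẋ τ‖² + f̃(x τ, μ u) + κ μ u` is differentiable, and by the equation of motion its
derivative at `u` is `-(α/u)‖ẋ u‖²`. Since `|∂ₘ f̃| ≤ κ`, the map `m ↦ f̃(z, m) + κ m` is
nondecreasing, so as `μ` decreases this frozen energy majorizes `W = inertialEnergy` to the right
of `u`. A
comparison with the Dini derivative then gives `W b + ∫ₐᵇ (α/τ)‖ẋ τ‖² ≤ W a`. Finally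
`f̃ ≥ f - κ μ ≥ inf f - κ μ`, so `W ≥ inf f`: being nonincreasing and bounded below, `W` converges,
and the integrals are bounded by `(W t₀ - inf f)/α`.
-/

theorem abs_sub_le_of_forall_hasDerivAt_abs_le {φ φ' : ℝ → ℝ} {s : Set ℝ} {C : ℝ}
    (hs : Convex ℝ s) (hφ : ∀ m ∈ s, HasDerivAt φ (φ' m) m) (hbd : ∀ m ∈ s, |φ' m| ≤ C)
    {m₁ m₂ : ℝ} (h₁ : m₁ ∈ s) (h₂ : m₂ ∈ s) : |φ m₁ - φ m₂| ≤ C * |m₁ - m₂| := by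
  simpa only [Real.norm_eq_abs] using hs.norm_image_sub_le_of_norm_hasDerivWithin_le
    (fun m hm => (hφ m hm).hasDerivWithinAt)
    (fun m hm => by simpa only [Real.norm_eq_abs] using hbd m hm) h₂ h₁

theorem continuousWithinAt_comp_of_abs_sub_le_mul {T X : Type*} [TopologicalSpace T]
    [TopologicalSpace X] {F : X → ℝ → ℝ} {x : T → X} {μ : T → ℝ} {s : Set T} {t : T} {K : ℝ}
    (hF : ContinuousAt (fun z => F z (μ t)) (x t)) (hx : ContinuousWithinAt x s t)
    (hμ : ContinuousWithinAt μ s t)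
    (hLip : ∀ᶠ τ in 𝓝[s] t, |F (x τ) (μ τ) - F (x τ) (μ t)| ≤ K * |μ τ - μ t|) :
    ContinuousWithinAt (fun τ => F (x τ) (μ τ)) s t := by
  have hfrozen : ContinuousWithinAt (fun τ => F (x τ) (μ t)) s t := hF.comp_continuousWithinAt hx
  have hbound : Tendsto (fun τ => K * |μ τ - μ t|) (𝓝[s] t) (𝓝 0) := by
    have h : ContinuousWithinAt (fun τ => K * |μ τ - μ t|) s t :=
      continuousWithinAt_const.mul (hμ.sub continuousWithinAt_const).abs
    simpa using h.tendsto
  have hdiff : Tendsto (fun τ => F (x τ) (μ τ) - F (x τ) (μ t)) (𝓝[s] t) (𝓝 0) :=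
    squeeze_zero_norm' (by simpa only [Real.norm_eq_abs] using hLip) hbound
  simpa [ContinuousWithinAt] using hfrozen.tendsto.add hdiff

theorem sub_le_integral_of_hasDerivWithinAt_majorant {W g : ℝ → ℝ} {a b : ℝ} (hab : a ≤ b)
    (hW : ContinuousOn W (Icc a b)) (hg : ContinuousOn g (Icc a b))
    (hmaj : ∀ u ∈ Ico a b, ∃ φ : ℝ → ℝ, HasDerivWithinAt φ (g u) (Ioi u) u ∧ φ u = W u ∧
      ∀ᶠ z in 𝓝[>] u, W z ≤ φ z) :
    W b - W a ≤ ∫ τ in a..b, g τ := by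
  have hprim : ContinuousOn (fun u => ∫ τ in a..u, g τ) (Icc a b) := by
    have hint : IntegrableOn g (uIcc a b) := by
      rw [uIcc_of_le hab]
      exact hg.integrableOn_compact isCompact_Icc
    simpa only [uIcc_of_le hab] using intervalIntegral.continuousOn_primitive_interval hint
  have hderiv : ∀ u ∈ Ico a b,
      HasDerivWithinAt (fun u => W a + ∫ τ in a..u, g τ) (g u) (Ici u) u := by
    intro u hu
    have hnhds : Icc a b ∈ 𝓝[>] u := Icc_mem_nhdsGT_of_mem hu
    have hint : IntervalIntegrable g volume a u :=
      (hg.mono (Icc_subset_Icc_right hu.2.le)).intervalIntegrable_of_Icc hu.1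
    exact (intervalIntegral.integral_hasDerivWithinAt_right hint
      ⟨Icc a b, hnhds, hg.aestronglyMeasurable measurableSet_Icc⟩
      ((hg u (Ico_subset_Icc_self hu)).mono_of_mem_nhdsWithin hnhds)).const_add (W a)
  have hslope : ∀ u ∈ Ico a b, ∀ r, g u < r → ∃ᶠ z in 𝓝[>] u, slope W u z < r := by
    intro u hu r hr
    obtain ⟨φ, hφ, hφu, hle⟩ := hmaj u hu
    have hφslope : Tendsto (slope φ u) (𝓝[>] u) (𝓝 (g u)) :=
      (hasDerivWithinAt_iff_tendsto_slope' (lt_irrefl u)).1 hφ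
    refine Eventually.frequently ?_
    filter_upwards [hφslope.eventually (eventually_lt_nhds hr), hle, self_mem_nhdsWithin]
      with z hz hWz huz
    refine lt_of_le_of_lt ?_ hz
    rw [slope_def_field, slope_def_field, hφu]
    exact div_le_div_of_nonneg_right (by linarith) (sub_nonneg.2 (le_of_lt huz))
  have := image_le_of_liminf_slope_right_le_deriv_boundary hW
    (B := fun u => W a + ∫ τ in a..u, g τ) (by simp)
    (continuousOn_const.add hprim) hderiv hslope (right_mem_Icc.2 hab)
  linarith

theorem AntitoneOn.exists_tendsto_atTop {f : ℝ → ℝ} {a : ℝ} (hf : AntitoneOn f (Ici a))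
    (hbdd : BddBelow (f '' Ici a)) : ∃ l, Tendsto f atTop (𝓝 l) := by
  have hanti : Antitone fun t => f (max t a) := fun s t hst =>
    hf (le_max_right s a) (le_max_right t a) (max_le_max hst le_rfl)
  have hbdd' : BddBelow (range fun t => f (max t a)) :=
    hbdd.mono (range_subset_iff.2 fun t => mem_image_of_mem f (le_max_right t a))
  refine ⟨_, (tendsto_atTop_ciInf hanti hbdd').congr' ?_⟩
  filter_upwards [eventually_ge_atTop a] with t ht
  rw [max_eq_left ht]

theorem integrableOn_Ici_of_intervalIntegral_le {h : ℝ → ℝ} {a C : ℝ}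
    (hcont : ContinuousOn h (Ici a)) (hnonneg : ∀ t ∈ Ici a, 0 ≤ h t)
    (hle : ∀ b ∈ Ici a, ∫ t in a..b, h t ≤ C) : IntegrableOn h (Ici a) := by
  rw [integrableOn_Ici_iff_integrableOn_Ioi]
  refine integrableOn_Ioi_of_intervalIntegral_norm_bounded C a (b := id) (l := atTop)
    (fun b => ?_) tendsto_id ?_
  · exact ((hcont.mono Icc_subset_Ici_self).integrableOn_compact isCompact_Icc).mono_set
      Ioc_subset_Icc_self
  · filter_upwards [eventually_ge_atTop a] with b hb
    refine le_of_eq_of_le (intervalIntegral.integral_congr fun t ht => ?_) (hle b hb)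
    rw [id, uIcc_of_le hb] at ht
    exact Real.norm_of_nonneg (hnonneg t ht.1)

section InertialDynamic

variable {H : Type*} [NormedAddCommGroup H]
  {ftil : H → ℝ → ℝ} {G : H → ℝ → H} {κ α t₀ : ℝ} {μ : ℝ → ℝ} {x x' x'' : ℝ → H}

noncomputable def inertialEnergy (ftil : H → ℝ → ℝ) (κ : ℝ) (μ : ℝ → ℝ) (x x' : ℝ → H)
    (t : ℝ) : ℝ :=
  1 / 2 * ‖x' t‖ ^ 2 + ftil (x t) (μ t) + κ * μ t

theorem le_inertialEnergy {f : H → ℝ} {c t : ℝ} (hc : ∀ z, c ≤ f z)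
    (happrox : ∀ z m, 0 < m → |ftil z m - f z| ≤ κ * m) (hμt : 0 < μ t) :
    c ≤ inertialEnergy ftil κ μ x x' t := by
  have := (abs_le.1 (happrox (x t) (μ t) hμt)).1
  unfold inertialEnergy
  linarith [hc (x t), sq_nonneg ‖x' t‖]

theorem continuousOn_div_mul_norm_sq (ht₀ : 0 < t₀) (hx' : ContinuousOn x' (Ici t₀)) :
    ContinuousOn (fun t => α / t * ‖x' t‖ ^ 2) (Ici t₀) :=
  (continuousOn_const.div continuousOn_id fun _ ht => (ht₀.trans_le ht).ne').mul (hx'.norm.pow 2)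

variable [InnerProductSpace ℝ H] [CompleteSpace H]

theorem hasDerivAt_frozen_energy {m u : ℝ}
    (hG : HasGradientAt (fun w => ftil w m) (G (x u) m) (x u)) (hx : HasDerivAt x (x' u) u)
    (hx' : HasDerivAt x' (x'' u) u) (heq : x'' u + (α / u) • x' u + G (x u) m = 0) :
    HasDerivAt (fun τ => 1 / 2 * ‖x' τ‖ ^ 2 + ftil (x τ) m) (-(α / u * ‖x' u‖ ^ 2)) u := by
  have hpot : HasDerivAt (fun τ => ftil (x τ) m) ⟪G (x u) m, x' u⟫ u := by
    simpa [InnerProductSpace.toDual_apply_apply, Function.comp_def] using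
      hG.hasFDerivAt.comp_hasDerivAt u hx
  refine ((hx'.norm_sq.const_mul (1 / 2)).add hpot).congr_deriv ?_
  rw [show x'' u = -((α / u) • x' u + G (x u) m) by rwa [add_assoc, add_eq_zero_iff_eq_neg] at heq]
  simp only [inner_neg_right, inner_add_right, real_inner_smul_right, real_inner_self_eq_norm_sq,
    real_inner_comm (G (x u) m) (x' u)]
  ring

variable (hLip : ∀ z m₁ m₂, 0 < m₁ → 0 < m₂ → |ftil z m₁ - ftil z m₂| ≤ κ * |m₁ - m₂|)
  (hμpos : ∀ t ∈ Ici t₀, 0 < μ t)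
  (hG : ∀ z m, 0 < m → HasGradientAt (fun w => ftil w m) (G z m) z)
  (hx : ∀ t ∈ Ici t₀, HasDerivAt x (x' t) t) (hx' : ∀ t ∈ Ici t₀, HasDerivAt x' (x'' t) t)
include hLip hμpos hG hx hx'

theorem continuousOn_inertialEnergy (hμ : ContinuousOn μ (Ici t₀)) :
    ContinuousOn (inertialEnergy ftil κ μ x x') (Ici t₀) := by
  intro t ht
  have hpot : ContinuousWithinAt (fun τ => ftil (x τ) (μ τ)) (Ici t₀) t :=
    continuousWithinAt_comp_of_abs_sub_le_mul
      (hG (x t) (μ t) (hμpos t ht)).hasFDerivAt.continuousAt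
      (hx t ht).continuousAt.continuousWithinAt (hμ t ht)
      (eventually_nhdsWithin_of_forall fun τ hτ => hLip _ _ _ (hμpos τ hτ) (hμpos t ht))
  exact ((continuousWithinAt_const.mul
    ((hx' t ht).continuousAt.norm.pow 2).continuousWithinAt).add hpot).add
    (continuousWithinAt_const.mul (hμ t ht))

theorem inertialEnergy_add_integral_le (ht₀ : 0 < t₀) (hμ : ContinuousOn μ (Ici t₀))
    (hμanti : AntitoneOn μ (Ici t₀))
    (heq : ∀ t ∈ Ici t₀, x'' t + (α / t) • x' t + G (x t) (μ t) = 0) ⦃a b : ℝ⦄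
    (ha : t₀ ≤ a) (hab : a ≤ b) :
    inertialEnergy ftil κ μ x x' b + ∫ τ in a..b, α / τ * ‖x' τ‖ ^ 2 ≤
      inertialEnergy ftil κ μ x x' a := by
  have hIcc : Icc a b ⊆ Ici t₀ := fun τ hτ => ha.trans hτ.1
  suffices h : inertialEnergy ftil κ μ x x' b - inertialEnergy ftil κ μ x x' a ≤
      ∫ τ in a..b, -(α / τ * ‖x' τ‖ ^ 2) by
    rw [intervalIntegral.integral_neg] at h
    linarith
  refine sub_le_integral_of_hasDerivWithinAt_majorant hab
    ((continuousOn_inertialEnergy hLip hμpos hG hx hx' hμ).mono hIcc)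
    ((continuousOn_div_mul_norm_sq ht₀
      fun t ht => (hx' t ht).continuousAt.continuousWithinAt).neg.mono hIcc) fun u hu => ?_
  have hu₀ : u ∈ Ici t₀ := hIcc (Ico_subset_Icc_self hu)
  refine ⟨fun τ => 1 / 2 * ‖x' τ‖ ^ 2 + ftil (x τ) (μ u) + κ * μ u,
    ((hasDerivAt_frozen_energy (hG _ _ (hμpos u hu₀)) (hx u hu₀) (hx' u hu₀)
      (heq u hu₀)).add_const _).hasDerivWithinAt, rfl, ?_⟩
  filter_upwards [self_mem_nhdsWithin] with z (hz : u < z)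
  have hz₀ : z ∈ Ici t₀ := hu₀.trans hz.le
  have hμz := hLip (x z) (μ z) (μ u) (hμpos z hz₀) (hμpos u hu₀)
  rw [abs_of_nonpos (sub_nonpos.2 (hμanti hu₀ hz₀ hz.le))] at hμz
  unfold inertialEnergy
  linarith [(abs_le.1 hμz).2]

theorem antitoneOn_inertialEnergy (ht₀ : 0 < t₀) (hα : 0 ≤ α) (hμ : ContinuousOn μ (Ici t₀))
    (hμanti : AntitoneOn μ (Ici t₀))
    (heq : ∀ t ∈ Ici t₀, x'' t + (α / t) • x' t + G (x t) (μ t) = 0) :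
    AntitoneOn (inertialEnergy ftil κ μ x x') (Ici t₀) := fun a ha b _ hab => by
  have hint : 0 ≤ ∫ τ in a..b, α / τ * ‖x' τ‖ ^ 2 :=
    intervalIntegral.integral_nonneg hab fun τ hτ => by
      have : 0 < τ := ht₀.trans_le (ha.trans hτ.1)
      positivity
  linarith [inertialEnergy_add_integral_le hLip hμpos hG hx hx' ht₀ hμ hμanti heq ha hab]

end InertialDynamic

theorem stmt7_general {H : Type*} [NormedAddCommGroup H] [InnerProductSpace ℝ H] [CompleteSpace H]
    (f : H → ℝ)
    (ftil : H → ℝ → ℝ) (κ : ℝ)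
    (dmu : H → ℝ → ℝ)
    (hdmu : ∀ (z : H) (m : ℝ), 0 < m → HasDerivAt (fun m' => ftil z m') (dmu z m) m)
    (hdmubd : ∀ (z : H) (m : ℝ), 0 < m → |dmu z m| ≤ κ)
    (happrox : ∀ (z : H) (m : ℝ), 0 < m → |ftil z m - f z| ≤ κ * m)
    (G : H → ℝ → H)
    (hG : ∀ (z : H) (m : ℝ), 0 < m → HasGradientAt (fun w => ftil w m) (G z m) z)
    (t₀ α : ℝ) (ht₀ : 0 < t₀) (hα : 0 < α)
    (μ μ' : ℝ → ℝ) (hμpos : ∀ t, t₀ ≤ t → 0 < μ t)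
    (hμderiv : ∀ t, t₀ ≤ t → HasDerivAt μ (μ' t) t)
    (hμdec : ∀ t, t₀ ≤ t → μ' t ≤ 0)
    (x x' x'' : ℝ → H)
    (hx : ∀ t, t₀ ≤ t → HasDerivAt x (x' t) t)
    (hx' : ∀ t, t₀ ≤ t → HasDerivAt x' (x'' t) t)
    (heq : ∀ t, t₀ ≤ t → x'' t + (α / t) • x' t + G (x t) (μ t) = 0)
    (hbdd : BddBelow (Set.range f)) :
    (∃ l : ℝ, Filter.Tendsto (fun s => (1/2) * ‖x' s‖^2 + ftil (x s) (μ s) + κ * μ s) Filter.atTop (nhds l)) ∧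
      IntegrableOn (fun t => (1 / t) * ‖x' t‖^2) (Set.Ici t₀) := by
  have hμcont : ContinuousOn μ (Ici t₀) := fun t ht => (hμderiv t ht).continuousAt.continuousWithinAt
  have hμanti : AntitoneOn μ (Ici t₀) :=
    antitoneOn_of_hasDerivWithinAt_nonpos (convex_Ici t₀) hμcont
      (fun t ht => (hμderiv t (interior_subset ht)).hasDerivWithinAt)
      fun t ht => hμdec t (interior_subset ht)
  have hLip : ∀ z m₁ m₂, 0 < m₁ → 0 < m₂ → |ftil z m₁ - ftil z m₂| ≤ κ * |m₁ - m₂| :=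
    fun z _ _ h₁ h₂ => abs_sub_le_of_forall_hasDerivAt_abs_le (convex_Ioi 0)
      (fun m hm => hdmu z m hm) (fun m hm => hdmubd z m hm) h₁ h₂
  obtain ⟨c, hc⟩ := hbdd
  have hlow : ∀ t ∈ Ici t₀, c ≤ inertialEnergy ftil κ μ x x' t := fun t ht =>
    le_inertialEnergy (fun z => hc (mem_range_self z)) happrox (hμpos t ht)
  have hint : IntegrableOn (fun t => α / t * ‖x' t‖ ^ 2) (Ici t₀) :=
    integrableOn_Ici_of_intervalIntegral_le (C := inertialEnergy ftil κ μ x x' t₀ - c)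
      (continuousOn_div_mul_norm_sq ht₀ fun t ht => (hx' t ht).continuousAt.continuousWithinAt)
      (fun t ht => by have : 0 < t := ht₀.trans_le ht; positivity)
      fun b hb => by
        linarith [inertialEnergy_add_integral_le hLip hμpos hG hx hx' ht₀ hμcont hμanti heq
          le_rfl hb, hlow b hb]
  refine ⟨(antitoneOn_inertialEnergy hLip hμpos hG hx hx' ht₀ hα.le hμcont hμanti heq
    ).exists_tendsto_atTop ⟨c, ?_⟩, ?_⟩
  · rintro _ ⟨t, ht, rfl⟩
    exact hlow t ht
  · refine IntegrableOn.congr_fun (hint.const_mul α⁻¹) (fun t _ => ?_) measurableSet_Ici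
    field_simp

theorem stmt7 {H : Type*} [NormedAddCommGroup H] [InnerProductSpace ℝ H] [CompleteSpace H]
    (f : H → ℝ) (hf : ConvexOn ℝ Set.univ f)
    (ftil : H → ℝ → ℝ) (κ : ℝ) (hκ : 0 < κ)
    (hconv : ∀ m : ℝ, 0 < m → ConvexOn ℝ Set.univ (fun z => ftil z m))
    (dmu : H → ℝ → ℝ)
    (hdmu : ∀ (z : H) (m : ℝ), 0 < m → HasDerivAt (fun m' => ftil z m') (dmu z m) m)
    (hdmubd : ∀ (z : H) (m : ℝ), 0 < m → |dmu z m| ≤ κ)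
    (happrox : ∀ (z : H) (m : ℝ), 0 < m → |ftil z m - f z| ≤ κ * m)
    (G : H → ℝ → H)
    (hG : ∀ (z : H) (m : ℝ), 0 < m → HasGradientAt (fun w => ftil w m) (G z m) z)
    (t₀ α : ℝ) (ht₀ : 0 < t₀) (hα : 0 < α)
    (μ μ' : ℝ → ℝ) (hμpos : ∀ t, t₀ ≤ t → 0 < μ t)
    (hμderiv : ∀ t, t₀ ≤ t → HasDerivAt μ (μ' t) t)
    (hμdec : ∀ t, t₀ ≤ t → μ' t ≤ 0)
    (hμlim : Filter.Tendsto μ Filter.atTop (nhds 0))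
    (x x' x'' : ℝ → H)
    (hx : ∀ t, t₀ ≤ t → HasDerivAt x (x' t) t)
    (hx' : ∀ t, t₀ ≤ t → HasDerivAt x' (x'' t) t)
    (heq : ∀ t, t₀ ≤ t → x'' t + (α / t) • x' t + G (x t) (μ t) = 0)
    (hbdd : BddBelow (Set.range f)) :
    (∃ l : ℝ, Filter.Tendsto (fun s => (1/2) * ‖x' s‖^2 + ftil (x s) (μ s) + κ * μ s) Filter.atTop (nhds l)) ∧
      IntegrableOn (fun t => (1 / t) * ‖x' t‖^2) (Set.Ici t₀) :=
  stmt7_general f ftil κ dmu hdmu hdmubd happrox G hG t₀ α ht₀ hα μ μ' hμpos hμderiv hμdec x x' x''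
    hx hx' heq hbdd
end

section
/- Let x be a solution of ẍ(t) + (α/t)ẋ(t) + ∇_x f̃(x(t),μ(t)) = 0 with α > 0, inf f > −∞, and ∫_{t₀}^∞ t μ(t) dt < ∞. Then lim_{t→∞} f(x(t)) = inf f and lim_{t→∞} ‖ẋ(t)‖ = 0. -/
open Filter Set
open scoped RealInnerProductSpace Topology

/-!
The energy `E = f̃(x, μ) + ‖ẋ‖²/2 + κμ` is nonincreasing along the trajectory with dissipation
`(α/t)‖ẋ‖²`: the term `κμ` absorbs the variation of the smoothing parameter, since `f̃` is
`κ`-Lipschitz in `μ` and `μ` decreases. As `E ≥ inf f`, it has a limit `L`. If `f z < L`, then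
`h = ‖x - z‖²/2` satisfies `ḧ + (α/t)ḣ ≤ f z - E + 2κμ + (3/2)‖ẋ‖²` by convexity of `f̃`; the
kinetic term is cancelled by the dissipation of `(3/(2α)) t^(α+1) (E - L)`, which shows that
`t^α ḣ ≤ C - c t^(α+1)`. Hence `ḣ → -∞`, contradicting `h ≥ 0`. So `L = inf f`, and both
`f(x t) - inf f` and `‖ẋ‖²/2` are squeezed between `0` and `E - inf f → 0`.

The energy need not be differentiable (`f̃` is only Lipschitz in `μ`), so its monotonicity is
obtained from differentiable majorants touching it from the right.
-/

theorem antitoneOn_Ici_of_hasDerivWithinAt_majorant {F : ℝ → ℝ} {a : ℝ}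
    (hF : ContinuousOn F (Ici a))
    (hmaj : ∀ t, a ≤ t → ∃ g : ℝ → ℝ, ∃ d ≤ 0, HasDerivWithinAt g d (Ici t) t ∧ g t = F t ∧
      ∀ᶠ u in 𝓝[>] t, F u ≤ g u) :
    AntitoneOn F (Ici a) := by
  intro s hs u _ hsu
  refine image_le_of_liminf_slope_right_le_deriv_boundary (B := fun _ => F s) (B' := fun _ => 0)
    (hF.mono (Icc_subset_Ici_self.trans (Ici_subset_Ici.2 hs))) le_rfl continuousOn_const
    (fun _ _ => hasDerivWithinAt_const _ _ _) (fun t ht r hr => ?_) (right_mem_Icc.2 hsu)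
  obtain ⟨g, d, hd, hg, hgt, hFg⟩ := hmaj t (le_trans hs ht.1)
  have hslope : ∀ᶠ u in 𝓝[>] t, slope F t u ≤ slope g t u := by
    filter_upwards [hFg, self_mem_nhdsWithin] with u hu htu
    rw [slope_def_field, slope_def_field, hgt]
    exact div_le_div_of_nonneg_right (by linarith) (sub_pos.2 htu).le
  exact (hg.liminf_right_slope_le (hd.trans_lt hr)).mp (hslope.mono fun u h1 h2 => h1.trans_lt h2)

theorem AntitoneOn.exists_tendsto_atTop_s8 {F : ℝ → ℝ} {a b : ℝ} (hF : AntitoneOn F (Ici a))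
    (hb : ∀ t, a ≤ t → b ≤ F t) :
    ∃ L, b ≤ L ∧ (∀ t, a ≤ t → L ≤ F t) ∧ Tendsto F atTop (𝓝 L) := by
  have hanti : Antitone fun t => F (max a t) := fun s u hsu =>
    hF (le_max_left a s) (le_max_left a u) (max_le_max le_rfl hsu)
  have hbdd : BddBelow (range fun t => F (max a t)) := by
    refine ⟨b, ?_⟩
    rintro _ ⟨t, rfl⟩
    exact hb _ (le_max_left a t)
  have hmax : ∀ t, a ≤ t → F (max a t) = F t := fun t ht => by rw [max_eq_right ht]
  refine ⟨_, le_ciInf fun t => hb _ (le_max_left a t), fun t ht => hmax t ht ▸ ciInf_le hbdd t,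
    (tendsto_atTop_ciInf hanti hbdd).congr' ?_⟩
  filter_upwards [eventually_ge_atTop a] with t ht using hmax t ht

theorem tendsto_atBot_of_hasDerivAt_tendsto_atBot {h h' : ℝ → ℝ}
    (hd : ∀ᶠ t in atTop, HasDerivAt h (h' t) t) (hh' : Tendsto h' atTop atBot) :
    Tendsto h atTop atBot := by
  obtain ⟨T, hT⟩ := eventually_atTop.1 (hd.and (hh'.eventually_le_atBot (-1)))
  have hanti : AntitoneOn (fun t => h t + t) (Ici T) :=
    antitoneOn_Ici_of_hasDerivWithinAt_majorant
      (fun t ht => ((hT t ht).1.continuousAt.add continuousAt_id).continuousWithinAt)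
      fun t ht => ⟨_, h' t + 1, by linarith [(hT t ht).2],
        ((hT t ht).1.add (hasDerivAt_id t)).hasDerivWithinAt, rfl, .of_forall fun _ => le_rfl⟩
  refine tendsto_atBot_mono' atTop ?_
    (tendsto_atBot_add_const_left atTop (h T + T) tendsto_neg_atTop_atBot)
  filter_upwards [eventually_ge_atTop T] with t ht
  linarith [hanti (mem_Ici.2 le_rfl) ht ht]

theorem ConvexOn.add_fderiv_sub_le {E : Type*} [NormedAddCommGroup E] [NormedSpace ℝ E]
    {φ : E → ℝ} (hφ : ConvexOn ℝ univ φ) {φ' : E →L[ℝ] ℝ} {p : E} (h : HasFDerivAt φ φ' p)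
    (z : E) : φ p + φ' (z - p) ≤ φ z := by
  have hline : HasDerivAt (φ ∘ (AffineMap.lineMap p z : ℝ →ᵃ[ℝ] E)) (φ' (z - p)) 0 := by
    rw [← AffineMap.lineMap_apply_zero p z (k := ℝ)] at h
    exact h.comp_hasDerivAt 0 AffineMap.hasDerivAt_lineMap
  have hslope := (hφ.comp_affineMap (AffineMap.lineMap p z)).le_slope_of_hasDerivAt
    (mem_univ 0) (mem_univ 1) one_pos hline
  simp only [slope_def_field, Function.comp_apply, AffineMap.lineMap_apply_one,
    AffineMap.lineMap_apply_zero, sub_zero, div_one] at hslope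
  linarith

section Smoothing

variable {H : Type*} [NormedAddCommGroup H] [InnerProductSpace ℝ H] [CompleteSpace H]

structure IsSmoothing (f : H → ℝ) (ftil : H → ℝ → ℝ) (κ : ℝ) (G : H → ℝ → H) : Prop where
  convexOn : ∀ m, 0 < m → ConvexOn ℝ univ (ftil · m)
  hasGradientAt : ∀ z m, 0 < m → HasGradientAt (ftil · m) (G z m) z
  abs_sub_le : ∀ z m, 0 < m → |ftil z m - f z| ≤ κ * m
  abs_sub_le_snd : ∀ z m₁ m₂, 0 < m₁ → 0 < m₂ → |ftil z m₁ - ftil z m₂| ≤ κ * |m₁ - m₂|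

noncomputable def dampedEnergy (ftil : H → ℝ → ℝ) (κ : ℝ) (μ : ℝ → ℝ) (x x' : ℝ → H) (t : ℝ) : ℝ :=
  ftil (x t) (μ t) + ‖x' t‖ ^ 2 / 2 + κ * μ t

namespace IsSmoothing

variable {f : H → ℝ} {ftil : H → ℝ → ℝ} {κ : ℝ} {G : H → ℝ → H} {μ : ℝ → ℝ}
  {x x' x'' : ℝ → H} {t₀ α t : ℝ}

theorem add_norm_sq_le_dampedEnergy (hs : IsSmoothing f ftil κ G) (hμt : 0 < μ t) :
    f (x t) + ‖x' t‖ ^ 2 / 2 ≤ dampedEnergy ftil κ μ x x' t := by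
  have := (abs_le.1 (hs.abs_sub_le (x t) _ hμt)).1
  unfold dampedEnergy
  linarith

theorem continuousOn_dampedEnergy (hs : IsSmoothing f ftil κ G)
    (hx : ∀ t, t₀ ≤ t → HasDerivAt x (x' t) t) (hx' : ∀ t, t₀ ≤ t → HasDerivAt x' (x'' t) t)
    (hμ : ContinuousOn μ (Ici t₀)) (hμpos : ∀ t, t₀ ≤ t → 0 < μ t) :
    ContinuousOn (dampedEnergy ftil κ μ x x') (Ici t₀) := by
  have hjoint : ContinuousOn (fun p : H × ℝ => ftil p.1 p.2) (univ ×ˢ Ioi 0) :=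
    continuousOn_prod_of_continuousOn_lipschitzOnWith' _ κ.toNNReal
      (fun z _ => LipschitzOnWith.of_dist_le_mul fun m₁ h₁ m₂ h₂ => by
        simpa only [Real.dist_eq] using (hs.abs_sub_le_snd z m₁ m₂ h₁ h₂).trans
          (mul_le_mul_of_nonneg_right (Real.le_coe_toNNReal κ) (abs_nonneg _)))
      fun m hm => fun z _ =>
        (hs.hasGradientAt z m hm).hasFDerivAt.continuousAt.continuousWithinAt
  have hxc : ContinuousOn x (Ici t₀) := fun t ht => (hx t ht).continuousAt.continuousWithinAt
  have hx'c : ContinuousOn x' (Ici t₀) := fun t ht => (hx' t ht).continuousAt.continuousWithinAt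
  exact ((hjoint.comp (hxc.prodMk hμ) fun t ht => ⟨mem_univ _, hμpos t ht⟩).add
    ((hx'c.norm.pow 2).div_const 2)).add (hμ.const_smul κ)

theorem dampedEnergy_le_freeze (hs : IsSmoothing f ftil κ G) (hμpos : ∀ t, t₀ ≤ t → 0 < μ t)
    (hμanti : AntitoneOn μ (Ici t₀)) {u : ℝ} (ht : t₀ ≤ t) (htu : t ≤ u) :
    dampedEnergy ftil κ μ x x' u ≤ dampedEnergy ftil κ (fun _ => μ t) x x' u := by
  have hμ : μ u ≤ μ t := hμanti ht (ht.trans htu) htu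
  have := (abs_le.1 (hs.abs_sub_le_snd (x u) _ _ (hμpos u (ht.trans htu)) (hμpos t ht))).2
  rw [abs_of_nonpos (by linarith)] at this
  unfold dampedEnergy
  linarith

theorem hasDerivAt_dampedEnergy_freeze (hs : IsSmoothing f ftil κ G)
    (hx : HasDerivAt x (x' t) t) (hx' : HasDerivAt x' (x'' t) t)
    (heq : x'' t + (α / t) • x' t + G (x t) (μ t) = 0) (hμt : 0 < μ t) :
    HasDerivAt (dampedEnergy ftil κ (fun _ => μ t) x x') (-(α / t * ‖x' t‖ ^ 2)) t := by
  have hG := (hs.hasGradientAt (x t) _ hμt).hasFDerivAt.comp_hasDerivAt t hx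
  refine ((hG.add (hx'.norm_sq.div_const 2)).add_const (κ * μ t)).congr_deriv ?_
  have hx'' : x'' t = -((α / t) • x' t + G (x t) (μ t)) := by
    rw [← sub_eq_zero, sub_neg_eq_add, ← add_assoc, heq]
  rw [InnerProductSpace.toDual_apply_apply, hx'']
  simp only [neg_add, inner_add_right, inner_neg_right, inner_smul_right,
    real_inner_self_eq_norm_sq, real_inner_comm (x' t)]
  ring

theorem antitoneOn_dampedEnergy (hs : IsSmoothing f ftil κ G)
    (hx : ∀ t, t₀ ≤ t → HasDerivAt x (x' t) t) (hx' : ∀ t, t₀ ≤ t → HasDerivAt x' (x'' t) t)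
    (heq : ∀ t, t₀ ≤ t → x'' t + (α / t) • x' t + G (x t) (μ t) = 0)
    (hμ : ContinuousOn μ (Ici t₀)) (hμpos : ∀ t, t₀ ≤ t → 0 < μ t)
    (hμanti : AntitoneOn μ (Ici t₀)) (ht₀ : 0 < t₀) (hα : 0 ≤ α) :
    AntitoneOn (dampedEnergy ftil κ μ x x') (Ici t₀) :=
  antitoneOn_Ici_of_hasDerivWithinAt_majorant (hs.continuousOn_dampedEnergy hx hx' hμ hμpos)
    fun t ht => ⟨_, _, neg_nonpos.2 (by have := ht₀.trans_le ht; positivity),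
      (hs.hasDerivAt_dampedEnergy_freeze (hx t ht) (hx' t ht) (heq t ht)
        (hμpos t ht)).hasDerivWithinAt, rfl,
      eventually_nhdsWithin_of_forall fun u htu =>
        hs.dampedEnergy_le_freeze hμpos hμanti ht (le_of_lt htu)⟩

theorem inner_deriv_add_le (hs : IsSmoothing f ftil κ G) (hμt : 0 < μ t)
    (heq : x'' t + (α / t) • x' t + G (x t) (μ t) = 0) (z : H) :
    ⟪x t - z, x'' t⟫ + ‖x' t‖ ^ 2 + α / t * ⟪x t - z, x' t⟫ ≤
      f z - dampedEnergy ftil κ μ x x' t + 2 * κ * μ t + 3 / 2 * ‖x' t‖ ^ 2 := by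
  have hsub := (hs.convexOn _ hμt).add_fderiv_sub_le (hs.hasGradientAt (x t) _ hμt).hasFDerivAt z
  rw [InnerProductSpace.toDual_apply_apply, ← neg_sub (x t) z, inner_neg_right,
    real_inner_comm] at hsub
  have happrox := (abs_le.1 (hs.abs_sub_le z _ hμt)).2
  have hODE := congrArg (⟪x t - z, ·⟫) heq
  simp only [inner_add_right, inner_smul_right, inner_zero_right] at hODE
  unfold dampedEnergy
  linarith

/-- The weight `3 / (2α)` is chosen so that the dissipation `-(α/t)‖ẋ‖²` of the energy cancels
the kinetic term `(3/2)‖ẋ‖²` of `inner_deriv_add_le`. -/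
theorem antitoneOn_lyapunov (hs : IsSmoothing f ftil κ G)
    (hx : ∀ t, t₀ ≤ t → HasDerivAt x (x' t) t) (hx' : ∀ t, t₀ ≤ t → HasDerivAt x' (x'' t) t)
    (heq : ∀ t, t₀ ≤ t → x'' t + (α / t) • x' t + G (x t) (μ t) = 0)
    (hμ : ContinuousOn μ (Ici t₀)) (hμpos : ∀ t, t₀ ≤ t → 0 < μ t)
    (hμanti : AntitoneOn μ (Ici t₀)) (ht₀ : 0 < t₀) (hα : 0 < α) {z : H} {L β T : ℝ}
    (hT : t₀ ≤ T)
    (hneg : ∀ t, T ≤ t → f z - dampedEnergy ftil κ μ x x' t + 2 * κ * μ t +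
      (α + 1) * (3 / (2 * α) * (dampedEnergy ftil κ μ x x' t - L) + β) ≤ 0) :
    AntitoneOn (fun u => u ^ α * (⟪x u - z, x' u⟫ +
      u * (3 / (2 * α) * (dampedEnergy ftil κ μ x x' u - L) + β))) (Ici T) := by
  have hE := (hs.continuousOn_dampedEnergy hx hx' hμ hμpos).mono (Ici_subset_Ici.2 hT)
  refine antitoneOn_Ici_of_hasDerivWithinAt_majorant (fun u hu => ?_) fun t ht => ?_
  · have hu₀ : t₀ ≤ u := hT.trans hu
    exact (Real.continuousAt_rpow_const u α (Or.inl (ht₀.trans_le hu₀).ne')).continuousWithinAt.mul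
      ((((hx u hu₀).continuousAt.sub continuousAt_const).inner
        (hx' u hu₀).continuousAt).continuousWithinAt.add (continuousWithinAt_id.mul
        ((continuousWithinAt_const.mul ((hE u hu).sub continuousWithinAt_const)).add
          continuousWithinAt_const)))
  have ht₀t : t₀ ≤ t := hT.trans ht
  have htpos : 0 < t := ht₀.trans_le ht₀t
  have hv := ((hx t ht₀t).sub_const z).inner ℝ (hx' t ht₀t)
  have hEt := hs.hasDerivAt_dampedEnergy_freeze (hx t ht₀t) (hx' t ht₀t) (heq t ht₀t)
    (hμpos t ht₀t)
  have hΦ := (Real.hasDerivAt_rpow_const (p := α) (Or.inl htpos.ne')).mul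
    (hv.add ((hasDerivAt_id t).mul (((hEt.sub_const L).const_mul (3 / (2 * α))).add_const β)))
  refine ⟨fun u => u ^ α * (⟪x u - z, x' u⟫ +
      u * (3 / (2 * α) * (dampedEnergy ftil κ (fun _ => μ t) x x' u - L) + β)), _, ?_,
    hΦ.hasDerivWithinAt, rfl, ?_⟩
  · have hA := hs.inner_deriv_add_le (hμpos t ht₀t) (heq t ht₀t) z
    refine (?_ : _ = t ^ α * (⟪x t - z, x'' t⟫ + ‖x' t‖ ^ 2 + α / t * ⟪x t - z, x' t⟫ +
      (α + 1) * (3 / (2 * α) * (dampedEnergy ftil κ μ x x' t - L) + β) -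
      3 / 2 * ‖x' t‖ ^ 2)).trans_le
      (mul_nonpos_of_nonneg_of_nonpos (by positivity) (by linarith [hneg t ht]))
    rw [Real.rpow_sub_one htpos.ne', real_inner_self_eq_norm_sq]
    simp only [Pi.add_apply, Pi.mul_apply, id, dampedEnergy]
    field_simp
    ring
  · filter_upwards [self_mem_nhdsWithin] with u (htu : t < u)
    have hupos : 0 < u := htpos.trans htu
    have := hs.dampedEnergy_le_freeze hμpos hμanti ht₀t htu.le (x := x) (x' := x')
    gcongr

theorem le_of_tendsto_dampedEnergy (hs : IsSmoothing f ftil κ G)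
    (hx : ∀ t, t₀ ≤ t → HasDerivAt x (x' t) t) (hx' : ∀ t, t₀ ≤ t → HasDerivAt x' (x'' t) t)
    (heq : ∀ t, t₀ ≤ t → x'' t + (α / t) • x' t + G (x t) (μ t) = 0)
    (hμ : ContinuousOn μ (Ici t₀)) (hμpos : ∀ t, t₀ ≤ t → 0 < μ t)
    (hμanti : AntitoneOn μ (Ici t₀)) (hμlim : Tendsto μ atTop (𝓝 0)) (ht₀ : 0 < t₀)
    (hα : 0 < α) {L : ℝ} (hEL : ∀ t, t₀ ≤ t → L ≤ dampedEnergy ftil κ μ x x' t)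
    (hElim : Tendsto (dampedEnergy ftil κ μ x x') atTop (𝓝 L)) (z : H) : L ≤ f z := by
  by_contra! hz
  set E := dampedEnergy ftil κ μ x x'
  obtain ⟨T, hT⟩ : ∃ T, ∀ t, T ≤ t →
      2 * κ * μ t + ((α + 1) * (3 / (2 * α)) - 1) * (E t - L) ≤ (L - f z) / 2 := by
    have hlim : Tendsto (fun t => 2 * κ * μ t + ((α + 1) * (3 / (2 * α)) - 1) * (E t - L))
        atTop (𝓝 0) := by
      simpa using (hμlim.const_mul (2 * κ)).add ((hElim.sub_const L).const_mul _)
    exact eventually_atTop.1 (hlim.eventually (ge_mem_nhds (by linarith)))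
  set β := (L - f z) / (2 * (α + 1))
  have hβ : 0 < β := by have := sub_pos.2 hz; positivity
  have hβα : (α + 1) * β = (L - f z) / 2 := by simp only [β]; field_simp
  have hΦ := hs.antitoneOn_lyapunov hx hx' heq hμ hμpos hμanti ht₀ hα (z := z) (L := L)
    (β := β) (le_max_right T t₀) fun t ht => by
      have := hT t ((le_max_left T t₀).trans ht)
      linear_combination this + hβα
  set C := (max T t₀) ^ α * (⟪x (max T t₀) - z, x' (max T t₀)⟫ +
    max T t₀ * (3 / (2 * α) * (E (max T t₀) - L) + β))
  have hv : ∀ t, max T t₀ ≤ t → ⟪x t - z, x' t⟫ ≤ C / t ^ α + -β * t := by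
    intro t ht
    have htpos : 0 < t := ht₀.trans_le ((le_max_right T t₀).trans ht)
    have hEt := hEL t ((le_max_right T t₀).trans ht)
    have hΦt : t ^ α * (⟪x t - z, x' t⟫ + t * (3 / (2 * α) * (E t - L) + β)) ≤ C :=
      hΦ (mem_Ici.2 le_rfl) ht ht
    have hW := (le_div_iff₀' (by positivity)).2 hΦt
    have : 0 ≤ t * (3 / (2 * α) * (E t - L)) := by have := sub_nonneg.2 hEt; positivity
    linarith
  have hvlim : Tendsto (fun t => ⟪x t - z, x' t⟫) atTop atBot :=
    tendsto_atBot_mono' _ (eventually_atTop.2 ⟨_, hv⟩)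
      ((tendsto_const_nhds.div_atTop (tendsto_rpow_atTop hα)).add_atBot
        (tendsto_id.const_mul_atTop_of_neg (neg_neg_of_pos hβ)))
  have hdist : Tendsto (fun t => ‖x t - z‖ ^ 2) atTop atBot :=
    tendsto_atBot_of_hasDerivAt_tendsto_atBot
      (eventually_atTop.2 ⟨t₀, fun t ht => ((hx t ht).sub_const z).norm_sq⟩)
      (hvlim.const_mul_atBot two_pos)
  obtain ⟨t, ht⟩ := (hdist.eventually_lt_atBot 0).exists
  exact ht.not_ge (by positivity)

end IsSmoothing

end Smoothing

theorem stmt8_general {H : Type*} [NormedAddCommGroup H] [InnerProductSpace ℝ H] [CompleteSpace H]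
    (f : H → ℝ)
    (ftil : H → ℝ → ℝ) (κ : ℝ)
    (hconv : ∀ m : ℝ, 0 < m → ConvexOn ℝ Set.univ (fun z => ftil z m))
    (dmu : H → ℝ → ℝ)
    (hdmu : ∀ (z : H) (m : ℝ), 0 < m → HasDerivAt (fun m' => ftil z m') (dmu z m) m)
    (hdmubd : ∀ (z : H) (m : ℝ), 0 < m → |dmu z m| ≤ κ)
    (happrox : ∀ (z : H) (m : ℝ), 0 < m → |ftil z m - f z| ≤ κ * m)
    (G : H → ℝ → H)
    (hG : ∀ (z : H) (m : ℝ), 0 < m → HasGradientAt (fun w => ftil w m) (G z m) z)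
    (t₀ α : ℝ) (ht₀ : 0 < t₀) (hα : 0 < α)
    (μ μ' : ℝ → ℝ) (hμpos : ∀ t, t₀ ≤ t → 0 < μ t)
    (hμderiv : ∀ t, t₀ ≤ t → HasDerivAt μ (μ' t) t)
    (hμdec : ∀ t, t₀ ≤ t → μ' t ≤ 0)
    (hμlim : Filter.Tendsto μ Filter.atTop (nhds 0))
    (x x' x'' : ℝ → H)
    (hx : ∀ t, t₀ ≤ t → HasDerivAt x (x' t) t)
    (hx' : ∀ t, t₀ ≤ t → HasDerivAt x' (x'' t) t)
    (heq : ∀ t, t₀ ≤ t → x'' t + (α / t) • x' t + G (x t) (μ t) = 0)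
    (hbdd : BddBelow (Set.range f)) :
    Filter.Tendsto (fun t => f (x t)) Filter.atTop (nhds (⨅ y : H, f y)) ∧
      Filter.Tendsto (fun t => ‖x' t‖) Filter.atTop (nhds 0) := by
  have hs : IsSmoothing f ftil κ G := ⟨hconv, hG, happrox, fun z m₁ m₂ h₁ h₂ => by
    simpa [Real.norm_eq_abs] using (convex_Ioi (0 : ℝ)).norm_image_sub_le_of_norm_hasDerivWithin_le
      (fun m hm => (hdmu z m hm).hasDerivWithinAt)
      (fun m hm => by simpa [Real.norm_eq_abs] using hdmubd z m hm) h₂ h₁⟩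
  have hμ : ContinuousOn μ (Ici t₀) := fun t ht => (hμderiv t ht).continuousAt.continuousWithinAt
  have hμanti : AntitoneOn μ (Ici t₀) := antitoneOn_Ici_of_hasDerivWithinAt_majorant hμ
    fun t ht => ⟨μ, μ' t, hμdec t ht, (hμderiv t ht).hasDerivWithinAt, rfl,
      .of_forall fun _ => le_rfl⟩
  have hfE : ∀ t, t₀ ≤ t → f (x t) + ‖x' t‖ ^ 2 / 2 ≤ dampedEnergy ftil κ μ x x' t :=
    fun t ht => hs.add_norm_sq_le_dampedEnergy (hμpos t ht)
  have hinf : ∀ y, ⨅ y, f y ≤ f y := ciInf_le hbdd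
  obtain ⟨L, hinfL, hEL, hElim⟩ :=
    (hs.antitoneOn_dampedEnergy hx hx' heq hμ hμpos hμanti ht₀ hα.le).exists_tendsto_atTop_s8
      (b := ⨅ y, f y) fun t ht => by linarith [hfE t ht, hinf (x t), sq_nonneg ‖x' t‖]
  obtain rfl : L = ⨅ y, f y := le_antisymm (le_ciInf fun z =>
    hs.le_of_tendsto_dampedEnergy hx hx' heq hμ hμpos hμanti hμlim ht₀ hα hEL hElim z) hinfL
  refine ⟨tendsto_of_tendsto_of_tendsto_of_le_of_le' tendsto_const_nhds hElim
    (.of_forall fun t => hinf (x t)) ?_, ?_⟩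
  · filter_upwards [eventually_ge_atTop t₀] with t ht
    linarith [hfE t ht, sq_nonneg ‖x' t‖]
  · have hsqrt : Tendsto (fun t => √(2 * (dampedEnergy ftil κ μ x x' t - ⨅ y, f y))) atTop
        (𝓝 0) := by
      simpa using ((hElim.sub_const (⨅ y, f y)).const_mul 2).sqrt
    refine tendsto_of_tendsto_of_tendsto_of_le_of_le' tendsto_const_nhds hsqrt
      (.of_forall fun t => norm_nonneg _) ?_
    filter_upwards [eventually_ge_atTop t₀] with t ht
    rw [Real.le_sqrt (norm_nonneg _) (by linarith [hfE t ht, hinf (x t), sq_nonneg ‖x' t‖])]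
    linarith [hfE t ht, hinf (x t)]

theorem stmt8 {H : Type*} [NormedAddCommGroup H] [InnerProductSpace ℝ H] [CompleteSpace H]
    (f : H → ℝ) (hf : ConvexOn ℝ Set.univ f)
    (ftil : H → ℝ → ℝ) (κ : ℝ) (hκ : 0 < κ)
    (hconv : ∀ m : ℝ, 0 < m → ConvexOn ℝ Set.univ (fun z => ftil z m))
    (dmu : H → ℝ → ℝ)
    (hdmu : ∀ (z : H) (m : ℝ), 0 < m → HasDerivAt (fun m' => ftil z m') (dmu z m) m)
    (hdmubd : ∀ (z : H) (m : ℝ), 0 < m → |dmu z m| ≤ κ)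
    (happrox : ∀ (z : H) (m : ℝ), 0 < m → |ftil z m - f z| ≤ κ * m)
    (G : H → ℝ → H)
    (hG : ∀ (z : H) (m : ℝ), 0 < m → HasGradientAt (fun w => ftil w m) (G z m) z)
    (t₀ α : ℝ) (ht₀ : 0 < t₀) (hα : 0 < α)
    (μ μ' : ℝ → ℝ) (hμpos : ∀ t, t₀ ≤ t → 0 < μ t)
    (hμderiv : ∀ t, t₀ ≤ t → HasDerivAt μ (μ' t) t)
    (hμdec : ∀ t, t₀ ≤ t → μ' t ≤ 0)
    (hμlim : Filter.Tendsto μ Filter.atTop (nhds 0))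
    (x x' x'' : ℝ → H)
    (hx : ∀ t, t₀ ≤ t → HasDerivAt x (x' t) t)
    (hx' : ∀ t, t₀ ≤ t → HasDerivAt x' (x'' t) t)
    (heq : ∀ t, t₀ ≤ t → x'' t + (α / t) • x' t + G (x t) (μ t) = 0)
    (hH1 : MeasureTheory.IntegrableOn (fun t => t * μ t) (Set.Ici t₀))
    (hbdd : BddBelow (Set.range f)) :
    Filter.Tendsto (fun t => f (x t)) Filter.atTop (nhds (⨅ y : H, f y)) ∧
      Filter.Tendsto (fun t => ‖x' t‖) Filter.atTop (nhds 0) :=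
  stmt8_general f ftil κ hconv dmu hdmu hdmubd happrox G hG t₀ α ht₀ hα μ μ' hμpos hμderiv hμdec
    hμlim x x' x'' hx hx' heq hbdd
end

section
/- Let x solve the perturbed dynamic ẍ(t) + (α/t)ẋ(t) + ∇_x f̃(x(t),μ(t)) = g(t) with α > 0, inf f > −∞, and ∫_{t₀}^∞ ‖g(s)‖ ds < ∞. Then sup_{t ≥ t₀} ‖ẋ(t)‖ < ∞ and ∫_{t₀}^∞ (1/t)‖ẋ(t)‖² dt < ∞. -/
/-!
Take the energy `E = f̃(x, μ) + κ μ + ‖ẋ‖² / 2`. Since `f̃` is not assumed jointly differentiable,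
`E` need not be differentiable; but convexity of `f̃(·, m)` together with the `κ`-Lipschitz
dependence on `m` and the decrease of `μ` give, for `s ≤ t`,
`f̃(x t, μ t) + κ μ t - f̃(x s, μ s) - κ μ s ≤ ⟪∇f̃(x t, μ t), x t - x s⟫`.
Hence the upper left Dini derivative of `E` is at most `⟪g, ẋ⟫ - (α / t) ‖ẋ‖²`, and a
Vitali–Carathéodory argument integrates this into
`E T + ∫ (α / t) ‖ẋ‖² ≤ E t₀ + ∫ ‖g‖ ‖ẋ‖`.
With `M = max ‖ẋ‖` on `[t₀, T]` this gives `M² / 2 ≤ E t₀ - inf f + M ∫ ‖g‖`, a quadratic bound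
on `M`, and then the dissipation integral is bounded as well.
-/

open MeasureTheory Filter Asymptotics Set
open scoped RealInnerProductSpace Topology

theorem LowerSemicontinuous.eventually_mul_sub_le_integral {G : ℝ → EReal} {a b c r : ℝ}
    (hG : LowerSemicontinuous G) (hint : IntegrableOn (fun t => (G t).toReal) (Icc a b))
    (htop : ∀ᵐ t ∂volume.restrict (Icc a b), G t < ⊤) (hc : c ∈ Ioc a b) (hr : (r : EReal) < G c) :
    ∀ᶠ z in 𝓝[<] c, r * (c - z) ≤ ∫ t in z..c, (G t).toReal := by
  obtain ⟨m, hmc, hmG⟩ := exists_Ioc_subset_of_mem_nhds (hG c r hr) ⟨a, hc.1⟩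
  filter_upwards [Ioo_mem_nhdsLT (max_lt hmc hc.1)] with z hz
  have hzc : Icc z c ⊆ Icc a b := Icc_subset_Icc ((le_max_right _ _).trans hz.1.le) hc.2
  calc r * (c - z) = ∫ _ in z..c, r := by simp [mul_comm]
    _ ≤ ∫ t in z..c, (G t).toReal := by
      refine intervalIntegral.integral_mono_ae_restrict hz.2.le intervalIntegrable_const
        ((intervalIntegrable_iff_integrableOn_Icc_of_le hz.2.le).2 (hint.mono_set hzc)) ?_
      filter_upwards [ae_restrict_of_ae_restrict_of_subset hzc htop,
        ae_restrict_mem measurableSet_Icc] with t ht_top ht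
      have hrt : (r : EReal) < G t := hmG ⟨(le_max_left _ _).trans_lt (hz.1.trans_le ht.1), ht.2⟩
      simpa using EReal.toReal_le_toReal hrt.le (EReal.coe_ne_bot r) ht_top.ne

theorem sub_le_integral_of_eventually_sub_le_left {w ρ : ℝ → ℝ} {a b : ℝ} (hab : a ≤ b)
    (hw : ContinuousOn w (Icc a b)) (hρ : IntegrableOn ρ (Icc a b))
    (hslope : ∀ c ∈ Ioc a b, ∀ r, ρ c < r → ∀ᶠ z in 𝓝[<] c, w c - w z ≤ r * (c - z)) :
    w b - w a ≤ ∫ t in a..b, ρ t := by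
  refine le_of_forall_pos_le_add fun ε hε => ?_
  -- a lower semicontinuous majorant `G` of `ρ` turns the pointwise bound into a local one
  obtain ⟨G, hρG, hGlsc, hGint, hGtop, hGε⟩ := exists_lt_lowerSemicontinuous_integral_lt ρ hρ hε
  have hGint' : IntegrableOn (fun t => (G t).toReal) (Icc a b) := hGint
  have hGii : ∀ u ∈ Icc a b, ∀ v ∈ Icc a b, IntervalIntegrable (fun t => (G t).toReal) volume u v :=
    fun u hu v hv => (hGint'.mono_set (uIcc_subset_Icc hu hv)).intervalIntegrable
  set s := {t | w b - w t ≤ ∫ u in t..b, (G u).toReal}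
  have hclosed : IsClosed (s ∩ Icc a b) := by
    have hcont : ContinuousOn (fun t => (w b - w t, ∫ u in t..b, (G u).toReal)) (Icc a b) := by
      rw [← uIcc_of_le hab] at hGint' hw ⊢
      exact (continuousOn_const.sub hw).prodMk
        (intervalIntegral.continuousOn_primitive_interval_left hGint')
    rw [inter_comm]
    exact hcont.preimage_isClosed_of_isClosed isClosed_Icc OrderClosedTopology.isClosed_le'
  have has : a ∈ s := by
    refine hclosed.mem_of_ge_of_forall_exists_lt (by simp [s]) hab fun c ⟨hcs, hc⟩ => ?_
    obtain ⟨r, hρr, hrG⟩ := EReal.lt_iff_exists_real_btwn.1 (hρG c)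
    obtain ⟨z, hwz, hGz, hz⟩ := ((hslope c hc r (EReal.coe_lt_coe_iff.1 hρr)).and
      ((hGlsc.eventually_mul_sub_le_integral hGint' hGtop hc hrG).and
        (Ioo_mem_nhdsLT hc.1))).exists
    refine ⟨z, ?_, hz.1.le, hz.2⟩
    have hcI : c ∈ Icc a b := Ioc_subset_Icc_self hc
    calc w b - w z = (w b - w c) + (w c - w z) := by ring
      _ ≤ (∫ u in c..b, (G u).toReal) + ∫ u in z..c, (G u).toReal :=
        add_le_add hcs (hwz.trans hGz)
      _ = ∫ u in z..b, (G u).toReal := by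
        rw [add_comm, intervalIntegral.integral_add_adjacent_intervals
          (hGii z ⟨hz.1.le, hz.2.le.trans hc.2⟩ c hcI) (hGii c hcI b (right_mem_Icc.2 hab))]
  calc w b - w a ≤ ∫ u in a..b, (G u).toReal := has
    _ ≤ (∫ t in a..b, ρ t) + ε := by
      simp only [intervalIntegral.integral_of_le hab, ← integral_Icc_eq_integral_Ioc]
      exact hGε.le

theorem intervalIntegral_mul_le_mul_setIntegral_Ici {u φ : ℝ → ℝ} {t₀ T M : ℝ} (hT : t₀ ≤ T)
    (hu : ContinuousOn u (Icc t₀ T)) (huM : ∀ t ∈ Icc t₀ T, u t ≤ M) (hM : 0 ≤ M)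
    (hφ : IntegrableOn φ (Ici t₀)) (hφ0 : ∀ t, 0 ≤ φ t) :
    ∫ t in t₀..T, φ t * u t ≤ M * ∫ t in Ici t₀, φ t := calc
  ∫ t in t₀..T, φ t * u t ≤ ∫ t in t₀..T, φ t * M := by
      have hφT := hφ.mono_set (Icc_subset_Ici_self : Icc t₀ T ⊆ Ici t₀)
      refine intervalIntegral.integral_mono_on hT ?_ ?_ fun t ht =>
        mul_le_mul_of_nonneg_left (huM t ht) (hφ0 t)
      · exact (intervalIntegrable_iff_integrableOn_Icc_of_le hT).2 <|
          hφT.mul_continuousOn hu isCompact_Icc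
      · exact (intervalIntegrable_iff_integrableOn_Icc_of_le hT).2 (hφT.mul_const M)
  _ = M * ∫ t in Ioc t₀ T, φ t := by
      rw [intervalIntegral.integral_mul_const, intervalIntegral.integral_of_le hT, mul_comm]
  _ ≤ M * ∫ t in Ici t₀, φ t :=
      mul_le_mul_of_nonneg_left (setIntegral_mono_set hφ (ae_of_all _ hφ0)
        (Ioc_subset_Icc_self.trans Icc_subset_Ici_self).eventuallyLE) hM

theorem le_add_sqrt_of_sq_le_add_integral {u φ : ℝ → ℝ} {t₀ E₀ : ℝ}
    (hu : ContinuousOn u (Ici t₀)) (hu0 : ∀ t, 0 ≤ u t)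
    (hφ : IntegrableOn φ (Ici t₀)) (hφ0 : ∀ t, 0 ≤ φ t)
    (hE : ∀ T, t₀ ≤ T → u T ^ 2 / 2 ≤ E₀ + ∫ t in t₀..T, φ t * u t) {T : ℝ} (hT : t₀ ≤ T) :
    u T ≤ (∫ t in Ici t₀, φ t) + √((∫ t in Ici t₀, φ t) ^ 2 + 2 * E₀) := by
  set I := ∫ t in Ici t₀, φ t
  obtain ⟨T', hT', hmax⟩ :=
    isCompact_Icc.exists_isMaxOn (nonempty_Icc.2 hT) (hu.mono Icc_subset_Ici_self)
  have hint : ∫ t in t₀..T', φ t * u t ≤ u T' * I :=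
    intervalIntegral_mul_le_mul_setIntegral_Ici hT'.1 (hu.mono Icc_subset_Ici_self)
      (fun t ht => hmax ⟨ht.1, ht.2.trans hT'.2⟩) (hu0 T') hφ hφ0
  have hsq : (u T' - I) ^ 2 ≤ I ^ 2 + 2 * E₀ := by nlinarith [hE T' hT'.1]
  calc u T ≤ u T' := hmax ⟨hT, le_rfl⟩
    _ ≤ I + √(I ^ 2 + 2 * E₀) := by linarith [(Real.abs_le_sqrt hsq).trans' (le_abs_self _)]

theorem integrableOn_Ici_of_intervalIntegral_le_s14 {D : ℝ → ℝ} {t₀ C : ℝ}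
    (hD : ContinuousOn D (Ici t₀)) (hD0 : ∀ t, t₀ ≤ t → 0 ≤ D t)
    (hC : ∀ T, t₀ ≤ T → ∫ t in t₀..T, D t ≤ C) : IntegrableOn D (Ici t₀) := by
  have hDi : ∀ T, IntegrableOn D (Icc t₀ T) := fun T =>
    (hD.mono Icc_subset_Ici_self).integrableOn_compact isCompact_Icc
  rw [integrableOn_Ici_iff_integrableOn_Ioi]
  refine integrableOn_Ioi_of_intervalIntegral_norm_bounded C t₀
    (fun T => (hDi T).mono_set Ioc_subset_Icc_self) tendsto_id ?_
  filter_upwards [eventually_ge_atTop t₀] with T hT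
  refine le_of_eq_of_le (intervalIntegral.integral_congr fun t ht => ?_) (hC T hT)
  rw [uIcc_of_le hT] at ht
  exact Real.norm_of_nonneg (hD0 t ht.1)

theorem exists_bound_and_integrableOn_of_energy_le {u φ D : ℝ → ℝ} {t₀ E₀ : ℝ}
    (hu : ContinuousOn u (Ici t₀)) (hu0 : ∀ t, 0 ≤ u t)
    (hφ : IntegrableOn φ (Ici t₀)) (hφ0 : ∀ t, 0 ≤ φ t)
    (hD : ContinuousOn D (Ici t₀)) (hD0 : ∀ t, t₀ ≤ t → 0 ≤ D t)
    (hE : ∀ T, t₀ ≤ T → u T ^ 2 / 2 + ∫ t in t₀..T, D t ≤ E₀ + ∫ t in t₀..T, φ t * u t) :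
    (∃ C, ∀ T, t₀ ≤ T → u T ≤ C) ∧ IntegrableOn D (Ici t₀) := by
  have hDint : ∀ T, t₀ ≤ T → 0 ≤ ∫ t in t₀..T, D t := fun T hT =>
    intervalIntegral.integral_nonneg hT fun t ht => hD0 t ht.1
  set C := (∫ t in Ici t₀, φ t) + √((∫ t in Ici t₀, φ t) ^ 2 + 2 * E₀)
  have hC : ∀ T, t₀ ≤ T → u T ≤ C := fun T hT =>
    le_add_sqrt_of_sq_le_add_integral hu hu0 hφ hφ0
      (fun T hT => by linarith [hE T hT, hDint T hT]) hT
  refine ⟨⟨C, hC⟩, integrableOn_Ici_of_intervalIntegral_le_s14 hD hD0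
    (C := E₀ + C * ∫ t in Ici t₀, φ t) fun T hT => ?_⟩
  have hφu : ∫ t in t₀..T, φ t * u t ≤ C * ∫ t in Ici t₀, φ t :=
    intervalIntegral_mul_le_mul_setIntegral_Ici hT (hu.mono Icc_subset_Ici_self)
      (fun t ht => hC t ht.1) ((hu0 T).trans (hC T hT)) hφ hφ0
  nlinarith [hE T hT, hφu]

theorem ConvexOn.add_inner_sub_le_of_hasGradientAt {H : Type*} [NormedAddCommGroup H]
    [InnerProductSpace ℝ H] [CompleteSpace H] {φ : H → ℝ} (hφ : ConvexOn ℝ univ φ) {z y Gz : H}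
    (hG : HasGradientAt φ Gz z) : φ z + ⟪Gz, y - z⟫ ≤ φ y := by
  have hline : HasDerivAt (φ ∘ AffineMap.lineMap (k := ℝ) z y) ⟪Gz, y - z⟫ 0 := by
    have hl : HasDerivAt (AffineMap.lineMap z y : ℝ → H) (y - z) 0 := AffineMap.hasDerivAt_lineMap
    have := (AffineMap.lineMap_apply_zero z y (k := ℝ) ▸ hG.hasFDerivAt).comp_hasDerivAt 0 hl
    simpa [InnerProductSpace.toDual_apply_apply] using this
  have := (hφ.comp_affineMap (AffineMap.lineMap (k := ℝ) z y)).le_slope_of_hasDerivAt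
    (mem_univ 0) (mem_univ 1) zero_lt_one hline
  rw [slope_def_field] at this
  simp only [Function.comp_apply, AffineMap.lineMap_apply_one, AffineMap.lineMap_apply_zero,
    sub_zero, div_one] at this
  linarith

theorem sub_le_inner_of_convexOn_of_abs_sub_le {H : Type*} [NormedAddCommGroup H]
    [InnerProductSpace ℝ H] [CompleteSpace H] {F : H → ℝ → ℝ} {m m' κ : ℝ} {y z Gy : H}
    (hconv : ConvexOn ℝ univ (F · m')) (hG : HasGradientAt (F · m') Gy y)
    (hLip : |F z m' - F z m| ≤ κ * |m' - m|) (hm : m' ≤ m) :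
    F y m' + κ * m' - (F z m + κ * m) ≤ ⟪Gy, y - z⟫ := by
  have hgrad := hconv.add_inner_sub_le_of_hasGradientAt hG (y := z)
  rw [abs_of_nonpos (sub_nonpos.2 hm)] at hLip
  have hneg : ⟪Gy, z - y⟫ = -⟪Gy, y - z⟫ := by rw [← inner_neg_right, neg_sub]
  linarith [(abs_le.1 hLip).2]

theorem continuousOn_comp_of_abs_sub_le {H : Type*} [TopologicalSpace H] {F : H → ℝ → ℝ}
    {x : ℝ → H} {μ : ℝ → ℝ} {s : Set ℝ} {κ : ℝ}
    (hF : ∀ t ∈ s, ContinuousAt (F · (μ t)) (x t))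
    (hLip : ∀ z, ∀ t ∈ s, ∀ t' ∈ s, |F z (μ t) - F z (μ t')| ≤ κ * |μ t - μ t'|)
    (hx : ContinuousOn x s) (hμ : ContinuousOn μ s) :
    ContinuousOn (fun t => F (x t) (μ t)) s := by
  intro t₁ ht₁
  have hfrozen : ContinuousWithinAt (fun t => F (x t) (μ t₁)) s t₁ :=
    (hF t₁ ht₁).comp_continuousWithinAt (hx t₁ ht₁)
  have hdiff : Tendsto (fun t => F (x t) (μ t) - F (x t) (μ t₁)) (𝓝[s] t₁) (𝓝 0) := by
    refine squeeze_zero_norm' ?_ (by simpa using (((hμ t₁ ht₁).sub_const (μ t₁)).abs).const_mul κ)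
    filter_upwards [self_mem_nhdsWithin] with t ht
    exact hLip (x t) t ht t₁ ht₁
  simpa [ContinuousWithinAt] using hfrozen.tendsto.add hdiff

theorem damped_energy_le {H : Type*} [NormedAddCommGroup H] [InnerProductSpace ℝ H]
    {x x' x'' G g : ℝ → H} {ψ γ : ℝ → ℝ} {a b : ℝ} (hab : a ≤ b)
    (hx : ∀ t ∈ Icc a b, HasDerivAt x (x' t) t) (hx' : ∀ t ∈ Icc a b, HasDerivAt x' (x'' t) t)
    (heq : ∀ t ∈ Icc a b, x'' t + γ t • x' t + G t = g t)
    (hψ : ContinuousOn ψ (Icc a b))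
    (hψG : ∀ s ∈ Icc a b, ∀ t ∈ Icc a b, s ≤ t → ψ t - ψ s ≤ ⟪G t, x t - x s⟫)
    (hγ : ContinuousOn γ (Icc a b)) (hg : IntegrableOn (fun t => ‖g t‖) (Icc a b)) :
    ψ b + ‖x' b‖ ^ 2 / 2 + ∫ t in a..b, γ t * ‖x' t‖ ^ 2 ≤
      ψ a + ‖x' a‖ ^ 2 / 2 + ∫ t in a..b, ‖g t‖ * ‖x' t‖ := by
  have hx'c : ContinuousOn x' (Icc a b) := fun t ht => (hx' t ht).continuousAt.continuousWithinAt
  have hforce : IntegrableOn (fun t => ‖g t‖ * ‖x' t‖) (Icc a b) :=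
    hg.mul_continuousOn hx'c.norm isCompact_Icc
  have hdamp : IntegrableOn (fun t => γ t * ‖x' t‖ ^ 2) (Icc a b) :=
    (hγ.mul (hx'c.norm.pow 2)).integrableOn_compact isCompact_Icc
  suffices ψ b + ‖x' b‖ ^ 2 / 2 - (ψ a + ‖x' a‖ ^ 2 / 2) ≤
      ∫ t in a..b, (‖g t‖ * ‖x' t‖ - γ t * ‖x' t‖ ^ 2) by
    rw [intervalIntegral.integral_sub ((intervalIntegrable_iff_integrableOn_Icc_of_le hab).2 hforce)
      ((intervalIntegrable_iff_integrableOn_Icc_of_le hab).2 hdamp)] at this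
    linarith
  refine sub_le_integral_of_eventually_sub_le_left (w := fun t => ψ t + ‖x' t‖ ^ 2 / 2) hab
    (hψ.add ((hx'c.norm.pow 2).div_const 2)) (hforce.sub hdamp) fun c hc r hr => ?_
  have hcI : c ∈ Icc a b := Ioc_subset_Icc_self hc
  -- left of `c`, the convexity bound `hψG` dominates the energy increments by those of `Φ`
  set Φ : ℝ → ℝ := fun z => ⟪G c, x z⟫ + ‖x' z‖ ^ 2 / 2
  have hΦ : HasDerivAt Φ (⟪g c, x' c⟫ - γ c * ‖x' c‖ ^ 2) c := by
    have h := ((hasDerivAt_const c (G c)).inner ℝ (hx c hcI)).add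
      (((hx' c hcI).norm_sq).div_const 2)
    refine h.congr_deriv ?_
    rw [← heq c hcI]
    simp only [inner_add_left, real_inner_smul_left, real_inner_self_eq_norm_sq, inner_zero_left,
      real_inner_comm (x' c) (x'' c)]
    ring
  have hlt : ⟪g c, x' c⟫ - γ c * ‖x' c‖ ^ 2 < r :=
    lt_of_le_of_lt (by linarith [real_inner_le_norm (g c) (x' c)]) hr
  filter_upwards [hΦ.hasDerivWithinAt.limsup_slope_le' (lt_irrefl c) hlt,
    Ioo_mem_nhdsLT hc.1] with z hslope hz
  have hΦz : Φ c - Φ z < r * (c - z) := by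
    rw [slope_def_field, div_lt_iff_of_neg (sub_neg.2 hz.2)] at hslope
    linarith
  have hψz := hψG z ⟨hz.1.le, hz.2.le.trans hc.2⟩ c hcI hz.2.le
  simp only [Φ, inner_sub_right] at hΦz hψz ⊢
  linarith

theorem smoothed_damped_energy_le {H : Type*} [NormedAddCommGroup H] [InnerProductSpace ℝ H]
    [CompleteSpace H] {F : H → ℝ → ℝ} {G : H → ℝ → H} {F' : H → ℝ → ℝ} {x x' x'' g : ℝ → H}
    {μ γ : ℝ → ℝ} {κ a b : ℝ} (hab : a ≤ b)
    (hconv : ∀ m, 0 < m → ConvexOn ℝ univ (F · m))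
    (hgrad : ∀ z m, 0 < m → HasGradientAt (F · m) (G z m) z)
    (hderiv : ∀ z m, 0 < m → HasDerivAt (F z ·) (F' z m) m)
    (hderiv_le : ∀ z m, 0 < m → |F' z m| ≤ κ)
    (hμpos : ∀ t ∈ Icc a b, 0 < μ t) (hμ : AntitoneOn μ (Icc a b)) (hμc : ContinuousOn μ (Icc a b))
    (hx : ∀ t ∈ Icc a b, HasDerivAt x (x' t) t) (hx' : ∀ t ∈ Icc a b, HasDerivAt x' (x'' t) t)
    (heq : ∀ t ∈ Icc a b, x'' t + γ t • x' t + G (x t) (μ t) = g t)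
    (hγ : ContinuousOn γ (Icc a b)) (hg : IntegrableOn (fun t => ‖g t‖) (Icc a b)) :
    F (x b) (μ b) + κ * μ b + ‖x' b‖ ^ 2 / 2 + ∫ t in a..b, γ t * ‖x' t‖ ^ 2 ≤
      F (x a) (μ a) + κ * μ a + ‖x' a‖ ^ 2 / 2 + ∫ t in a..b, ‖g t‖ * ‖x' t‖ := by
  have hLip : ∀ z, ∀ t ∈ Icc a b, ∀ s ∈ Icc a b, |F z (μ t) - F z (μ s)| ≤ κ * |μ t - μ s| :=
    fun z t ht s hs => by
      simpa [Real.norm_eq_abs] using (convex_Ioi 0).norm_image_sub_le_of_norm_hasDerivWithin_le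
        (fun m hm => (hderiv z m hm).hasDerivWithinAt) (hderiv_le z) (hμpos s hs) (hμpos t ht)
  have hψ : ContinuousOn (fun t => F (x t) (μ t) + κ * μ t) (Icc a b) :=
    (continuousOn_comp_of_abs_sub_le
      (fun t ht => (hgrad (x t) (μ t) (hμpos t ht)).differentiableAt.continuousAt) hLip
      (fun t ht => (hx t ht).continuousAt.continuousWithinAt) hμc).add (hμc.const_smul κ)
  exact damped_energy_le hab hx hx' heq hψ
    (fun s hs t ht hst => sub_le_inner_of_convexOn_of_abs_sub_le (hconv _ (hμpos t ht))
      (hgrad _ _ (hμpos t ht)) (hLip _ t ht s hs) (hμ hs ht hst)) hγ hg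

theorem stmt14_general {H : Type*} [NormedAddCommGroup H] [InnerProductSpace ℝ H] [CompleteSpace H]
    (f : H → ℝ)
    (ftil : H → ℝ → ℝ) (κ : ℝ)
    (hconv : ∀ m : ℝ, 0 < m → ConvexOn ℝ Set.univ (fun z => ftil z m))
    (dmu : H → ℝ → ℝ)
    (hdmu : ∀ (z : H) (m : ℝ), 0 < m → HasDerivAt (fun m' => ftil z m') (dmu z m) m)
    (hdmubd : ∀ (z : H) (m : ℝ), 0 < m → |dmu z m| ≤ κ)
    (happrox : ∀ (z : H) (m : ℝ), 0 < m → |ftil z m - f z| ≤ κ * m)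
    (G : H → ℝ → H)
    (hG : ∀ (z : H) (m : ℝ), 0 < m → HasGradientAt (fun w => ftil w m) (G z m) z)
    (g : ℝ → H)
    (t₀ α : ℝ) (ht₀ : 0 < t₀) (hα : 0 < α)
    (μ μ' : ℝ → ℝ) (hμpos : ∀ t, t₀ ≤ t → 0 < μ t)
    (hμderiv : ∀ t, t₀ ≤ t → HasDerivAt μ (μ' t) t)
    (hμdec : ∀ t, t₀ ≤ t → μ' t ≤ 0)
    (x x' x'' : ℝ → H)
    (hx : ∀ t, t₀ ≤ t → HasDerivAt x (x' t) t)
    (hx' : ∀ t, t₀ ≤ t → HasDerivAt x' (x'' t) t)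
    (heq : ∀ t, t₀ ≤ t → x'' t + (α / t) • x' t + G (x t) (μ t) = g t)
    (hbdd : BddBelow (Set.range f))
    (hgint : IntegrableOn (fun t => ‖g t‖) (Set.Ici t₀)) :
    (∃ C : ℝ, ∀ t, t₀ ≤ t → ‖x' t‖ ≤ C) ∧
      IntegrableOn (fun t => (1 / t) * ‖x' t‖^2) (Set.Ici t₀) := by
  obtain ⟨c₀, hc₀⟩ := hbdd
  have hμc : ContinuousOn μ (Ici t₀) := fun t ht => (hμderiv t ht).continuousAt.continuousWithinAt
  have hμanti : AntitoneOn μ (Ici t₀) := antitoneOn_of_hasDerivWithinAt_nonpos (convex_Ici t₀) hμc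
    (fun t ht => (hμderiv t (interior_subset ht)).hasDerivWithinAt)
    (fun t ht => hμdec t (interior_subset ht))
  have hdamping : ∀ t ≥ t₀, ContinuousAt (fun t => α / t) t := fun t ht =>
    continuousAt_const.div continuousAt_id (ht₀.trans_le ht).ne'
  have hE : ∀ T ≥ t₀, ‖x' T‖ ^ 2 / 2 + ∫ t in t₀..T, α / t * ‖x' t‖ ^ 2 ≤
      (ftil (x t₀) (μ t₀) + κ * μ t₀ + ‖x' t₀‖ ^ 2 / 2 - c₀) + ∫ t in t₀..T, ‖g t‖ * ‖x' t‖ := by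
    intro T hT
    have henergy := smoothed_damped_energy_le hT hconv hG hdmu hdmubd (fun t ht => hμpos t ht.1)
      (hμanti.mono Icc_subset_Ici_self) (hμc.mono Icc_subset_Ici_self)
      (fun t ht => hx t ht.1) (fun t ht => hx' t ht.1) (fun t ht => heq t ht.1)
      (fun t ht => (hdamping t ht.1).continuousWithinAt) (hgint.mono_set Icc_subset_Ici_self)
    have hc₀T : c₀ ≤ ftil (x T) (μ T) + κ * μ T :=
      (hc₀ ⟨x T, rfl⟩).trans (by linarith [(abs_le.1 (happrox (x T) (μ T) (hμpos T hT))).1])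
    linarith
  obtain ⟨hbound, hint⟩ := exists_bound_and_integrableOn_of_energy_le (u := fun t => ‖x' t‖)
    (φ := fun t => ‖g t‖) (D := fun t => α / t * ‖x' t‖ ^ 2)
    (fun t ht => (hx' t ht).continuousAt.norm.continuousWithinAt) (fun t => norm_nonneg _)
    hgint (fun t => norm_nonneg _)
    (fun t ht => ((hdamping t ht).mul ((hx' t ht).continuousAt.norm.pow 2)).continuousWithinAt)
    (fun t ht => by have := ht₀.trans_le ht; positivity) hE
  refine ⟨hbound, ?_⟩
  have hscaled : IntegrableOn (fun t => α⁻¹ * (α / t * ‖x' t‖ ^ 2)) (Ici t₀) :=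
    hint.const_mul α⁻¹
  exact hscaled.congr_fun (fun t _ => by field_simp) measurableSet_Ici

theorem stmt14 {H : Type*} [NormedAddCommGroup H] [InnerProductSpace ℝ H] [CompleteSpace H]
    (f : H → ℝ) (hf : ConvexOn ℝ Set.univ f)
    (ftil : H → ℝ → ℝ) (κ : ℝ) (hκ : 0 < κ)
    (hconv : ∀ m : ℝ, 0 < m → ConvexOn ℝ Set.univ (fun z => ftil z m))
    (dmu : H → ℝ → ℝ)
    (hdmu : ∀ (z : H) (m : ℝ), 0 < m → HasDerivAt (fun m' => ftil z m') (dmu z m) m)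
    (hdmubd : ∀ (z : H) (m : ℝ), 0 < m → |dmu z m| ≤ κ)
    (happrox : ∀ (z : H) (m : ℝ), 0 < m → |ftil z m - f z| ≤ κ * m)
    (G : H → ℝ → H)
    (hG : ∀ (z : H) (m : ℝ), 0 < m → HasGradientAt (fun w => ftil w m) (G z m) z)
    (g : ℝ → H)
    (t₀ α : ℝ) (ht₀ : 0 < t₀) (hα : 0 < α)
    (μ μ' : ℝ → ℝ) (hμpos : ∀ t, t₀ ≤ t → 0 < μ t)
    (hμderiv : ∀ t, t₀ ≤ t → HasDerivAt μ (μ' t) t)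
    (hμdec : ∀ t, t₀ ≤ t → μ' t ≤ 0)
    (hμlim : Filter.Tendsto μ Filter.atTop (nhds 0))
    (x x' x'' : ℝ → H)
    (hx : ∀ t, t₀ ≤ t → HasDerivAt x (x' t) t)
    (hx' : ∀ t, t₀ ≤ t → HasDerivAt x' (x'' t) t)
    (heq : ∀ t, t₀ ≤ t → x'' t + (α / t) • x' t + G (x t) (μ t) = g t)
    (hbdd : BddBelow (Set.range f))
    (hgint : IntegrableOn (fun t => ‖g t‖) (Set.Ici t₀)) :
    (∃ C : ℝ, ∀ t, t₀ ≤ t → ‖x' t‖ ≤ C) ∧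
      IntegrableOn (fun t => (1 / t) * ‖x' t‖^2) (Set.Ici t₀) :=
  stmt14_general f ftil κ hconv dmu hdmu hdmubd happrox G hG g t₀ α ht₀ hα μ μ' hμpos hμderiv hμdec
    x x' x'' hx hx' heq hbdd hgint
end

section
/- Let S ⊆ H be nonempty and x : [0,∞) → H such that (i) for every z ∈ S, lim_{t→∞} ‖x(t) − z‖ exists, and (ii) every weak sequential limit point of x(t) as t → ∞ belongs to S. Then x(t) converges weakly as t → ∞ to a point of S. -/
/-!
A trajectory along which `‖x t - z‖` converges is eventually bounded, so by sequential
Banach–Alaoglu (in the separable closed span of a sequence, combined with the Riesz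
representation) every sequence `x (t n)` with `t n → ∞` has a weakly convergent subsequence,
whose limit lies in `S` by (ii). Any two such limits `p, q` coincide: by (i) and the identity
`2 ⟪v, q - p⟫ = ‖v - p‖² - ‖v - q‖² - ‖p‖² + ‖q‖²`, the function `⟪x t, q - p⟫` converges, so
`⟪p, q - p⟫ = ⟪q, q - p⟫`. A bounded sequence all of whose weak cluster points agree converges
weakly.
-/

open Filter Topology TopologicalSpace

def TendstoWeakly (𝕜 : Type*) {α E : Type*} [RCLike 𝕜] [NormedAddCommGroup E]
    [InnerProductSpace 𝕜 E] (f : α → E) (l : Filter α) (p : E) : Prop :=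
  ∀ y : E, Tendsto (fun a => inner 𝕜 (f a) y) l (𝓝 (inner 𝕜 p y))

section WeakCompactness
variable {𝕜 E : Type*} [RCLike 𝕜] [NormedAddCommGroup E] [InnerProductSpace 𝕜 E]
  [CompleteSpace E]

theorem exists_tendstoWeakly_subseq_of_separable [SeparableSpace E] {u : ℕ → E} {M : ℝ}
    (hu : ∀ᶠ n in atTop, ‖u n‖ ≤ M) :
    ∃ p : E, ∃ φ : ℕ → ℕ, StrictMono φ ∧ TendstoWeakly 𝕜 (u ∘ φ) atTop p := by
  let v : ℕ → WeakDual 𝕜 E := fun n => innerSL 𝕜 (u n)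
  have hv : ∀ᶠ n in atTop, v n ∈ WeakDual.toStrongDual ⁻¹' Metric.closedBall 0 M := by
    filter_upwards [hu] with n hn
    rw [Set.mem_preimage, mem_closedBall_zero_iff]
    show ‖innerSL 𝕜 (u n)‖ ≤ M
    rwa [innerSL_apply_norm]
  obtain ⟨f, -, φ, hφ, hf⟩ :=
    (WeakDual.isSeqCompact_closedBall 𝕜 E 0 M).subseq_of_frequently_in hv.frequently
  refine ⟨(InnerProductSpace.toDual 𝕜 E).symm (WeakDual.toStrongDual f), φ, hφ, fun y => ?_⟩
  rw [InnerProductSpace.toDual_symm_apply]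
  exact ((WeakDual.eval_continuous y).tendsto f).comp hf

theorem exists_tendstoWeakly_subseq {u : ℕ → E} {M : ℝ} (hu : ∀ᶠ n in atTop, ‖u n‖ ≤ M) :
    ∃ p : E, ∃ φ : ℕ → ℕ, StrictMono φ ∧ TendstoWeakly 𝕜 (u ∘ φ) atTop p := by
  set K := (Submodule.span 𝕜 (Set.range u)).topologicalClosure
  have huK : ∀ n, u n ∈ K := fun n =>
    Submodule.le_topologicalClosure _ (Submodule.subset_span ⟨n, rfl⟩)
  have : SeparableSpace K := (Set.countable_range u).isSeparable.span.closure.separableSpace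
  have : CompleteSpace K := (Submodule.isClosed_topologicalClosure _).completeSpace_coe
  obtain ⟨p, φ, hφ, hp⟩ :=
    exists_tendstoWeakly_subseq_of_separable (𝕜 := 𝕜) (u := fun n => (⟨u n, huK n⟩ : K)) hu
  refine ⟨p, φ, hφ, fun y => ?_⟩
  simpa using hp (K.orthogonalProjectionOnto y)

theorem tendstoWeakly_of_forall_subseq {α : Type*} {l : Filter α} [l.IsCountablyGenerated]
    {x : α → E} {p : E} {M : ℝ} (hM : ∀ᶠ t in l, ‖x t‖ ≤ M)
    (huniq : ∀ s : ℕ → α, Tendsto s atTop l → ∀ q, TendstoWeakly 𝕜 (x ∘ s) atTop q → q = p) :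
    TendstoWeakly 𝕜 x l p := by
  intro y
  refine tendsto_of_subseq_tendsto fun s hs => ?_
  obtain ⟨q, φ, hφ, hq⟩ := exists_tendstoWeakly_subseq (𝕜 := 𝕜) (hs.eventually hM)
  obtain rfl := huniq (s ∘ φ) (hs.comp hφ.tendsto_atTop) q hq
  exact ⟨φ, hq y⟩

end WeakCompactness

section Real
variable {E α : Type*} [NormedAddCommGroup E] [InnerProductSpace ℝ E] {l : Filter α}

theorem tendsto_inner_sub_of_tendsto_norm_sub {x : α → E} {p q : E} {a b : ℝ}
    (hp : Tendsto (fun t => ‖x t - p‖) l (𝓝 a)) (hq : Tendsto (fun t => ‖x t - q‖) l (𝓝 b)) :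
    Tendsto (fun t => inner ℝ (x t) (q - p)) l (𝓝 ((a ^ 2 - b ^ 2 - ‖p‖ ^ 2 + ‖q‖ ^ 2) / 2)) := by
  have hpolar : ∀ v : E,
      inner ℝ v (q - p) = (‖v - p‖ ^ 2 - ‖v - q‖ ^ 2 - ‖p‖ ^ 2 + ‖q‖ ^ 2) / 2 := by
    intro v
    rw [norm_sub_sq_real, norm_sub_sq_real, inner_sub_right]
    ring
  simp only [hpolar]
  exact ((((hp.pow 2).sub (hq.pow 2)).sub_const _).add_const _).div_const _

theorem eq_of_tendstoWeakly_of_tendsto_norm_sub {x : α → E} {p q : E} {a b : ℝ}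
    (hp : Tendsto (fun t => ‖x t - p‖) l (𝓝 a)) (hq : Tendsto (fun t => ‖x t - q‖) l (𝓝 b))
    {s s' : ℕ → α} (hs : Tendsto s atTop l) (hs' : Tendsto s' atTop l)
    (hps : TendstoWeakly ℝ (x ∘ s) atTop p) (hqs : TendstoWeakly ℝ (x ∘ s') atTop q) :
    p = q := by
  have hlim := tendsto_inner_sub_of_tendsto_norm_sub hp hq
  have hpc := tendsto_nhds_unique (hps (q - p)) (hlim.comp hs)
  have hqc := tendsto_nhds_unique (hqs (q - p)) (hlim.comp hs')
  have : inner ℝ (q - p) (q - p) = 0 := by rw [inner_sub_left, hpc, hqc, sub_self]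
  exact (sub_eq_zero.mp (inner_self_eq_zero.mp this)).symm

end Real

theorem stmt18 {H : Type*} [NormedAddCommGroup H] [InnerProductSpace ℝ H] [CompleteSpace H]
    (S : Set H) (hS : S.Nonempty) (x : ℝ → H)
    (h1 : ∀ z ∈ S, ∃ l : ℝ, Filter.Tendsto (fun t => ‖x t - z‖) Filter.atTop (nhds l))
    (h2 : ∀ p : H, ∀ t : ℕ → ℝ, Filter.Tendsto t Filter.atTop Filter.atTop →
      (∀ y : H, Filter.Tendsto (fun n => (inner ℝ (x (t n)) y : ℝ)) Filter.atTop
        (nhds (inner ℝ p y : ℝ))) → p ∈ S) :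
    ∃ p ∈ S, ∀ y : H, Filter.Tendsto (fun t => (inner ℝ (x t) y : ℝ))
      Filter.atTop (nhds (inner ℝ p y : ℝ)) := by
  obtain ⟨z, hz⟩ := hS
  obtain ⟨l, hl⟩ := h1 z hz
  have hM : ∀ᶠ t in atTop, ‖x t‖ ≤ ‖z‖ + (l + 1) := by
    filter_upwards [hl.eventually (ge_mem_nhds (lt_add_one l))] with t ht
    linarith [norm_le_norm_add_norm_sub' (x t) z]
  have hnat : Tendsto (Nat.cast : ℕ → ℝ) atTop atTop := tendsto_natCast_atTop_atTop
  obtain ⟨p, φ, hφ, hp⟩ := exists_tendstoWeakly_subseq (𝕜 := ℝ) (hnat.eventually hM)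
  have hseq : Tendsto ((Nat.cast : ℕ → ℝ) ∘ φ) atTop atTop := hnat.comp hφ.tendsto_atTop
  have hpS : p ∈ S := h2 p _ hseq hp
  refine ⟨p, hpS, tendstoWeakly_of_forall_subseq hM fun s hs q hq => ?_⟩
  obtain ⟨a, ha⟩ := h1 p hpS
  obtain ⟨b, hb⟩ := h1 q (h2 q s hs hq)
  exact (eq_of_tendstoWeakly_of_tendsto_norm_sub ha hb hseq hs hp hq).symm
end
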